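/- arXiv:2010.08940 — 13 statements merged into one kernel-verified Lean document; each statement's English description precedes it below -/
import Mathlib

section
/- The rational number c₀ = Σ_{i=1}^m ĝ_i·β_i/α_i + (a_1⋯a_m)/ℓ² is a positive integer (it equals minus the self-intersection number of the central curve E_0 in the minimal good resolution graph Γ(a_1,…,a_m) of the Brieskorn complete intersection singularity). -/
/-- The rational number `c₀ = Σ_i ĝ i * β i / α i + (a 1 ⋯ a m)/ℓ²` is a positive
integer. -/
theorem brieskorn_c0_positive_integer
    (m : ℕ) (hm : 3 ≤ m) (a : Fin m → ℕ)
    (ha : ∀ i, 2 ≤ a i) (hmono : Monotone a)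
    (ℓ : ℕ) (hℓ : ℓ = Finset.univ.lcm a)
    (ℓi : Fin m → ℕ) (hℓi : ∀ i, ℓi i = (Finset.univ.erase i).lcm a)
    (α : Fin m → ℕ) (hα : ∀ i, α i = ℓ / ℓi i)
    (e : Fin m → ℕ) (he : ∀ i, e i = ℓ / a i)
    (g : ℕ) (hg : g = (∏ i, a i) / ℓ)
    (gi : Fin m → ℕ) (hgi : ∀ i, gi i = g * α i / a i)
    (β : Fin m → ℕ) (hβ : ∀ i, β i < α i) (hβ' : ∀ i, α i ∣ e i * β i + 1) :
    ∃ c : ℤ, 0 < c ∧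
      (c : ℚ) = (∑ i, (gi i : ℚ) * (β i : ℚ) / (α i : ℚ))
        + (∏ i, (a i : ℚ)) / (ℓ : ℚ) ^ 2 := by
  have hapos : ∀ i, 0 < a i := fun i => lt_of_lt_of_le two_pos (ha i)
  have hprod_pos : 0 < ∏ i, a i := Finset.prod_pos fun i _ => hapos i
  have hdvd_la : ∀ i, a i ∣ ℓ := fun i => by
    rw [hℓ]; exact Finset.dvd_lcm (Finset.mem_univ i)
  have hdvd_lprod : ℓ ∣ ∏ i, a i := by
    rw [hℓ]
    exact Finset.lcm_dvd fun i _ => Finset.dvd_prod_of_mem a (Finset.mem_univ i)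
  have hℓpos : 0 < ℓ := by
    rcases Nat.eq_zero_or_pos ℓ with h | h
    · rw [h] at hdvd_lprod; simp only [Nat.zero_dvd] at hdvd_lprod; omega
    · exact h
  have hℓ0 : (ℓ : ℚ) ≠ 0 := by exact_mod_cast hℓpos.ne'
  have hℓi_dvd : ∀ i, ℓi i ∣ ℓ := fun i => by
    rw [hℓi]; exact Finset.lcm_dvd fun j _ => hdvd_la j
  have hℓi_pos : ∀ i, 0 < ℓi i := by
    intro i
    rcases Nat.eq_zero_or_pos (ℓi i) with h | h
    · have := hℓi_dvd i; rw [h] at this; simp only [Nat.zero_dvd] at this; omega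
    · exact h
  have hαℓ : ∀ i, α i * ℓi i = ℓ := fun i => by
    rw [hα]; exact Nat.div_mul_cancel (hℓi_dvd i)
  have hαpos : ∀ i, 0 < α i := by
    intro i
    rcases Nat.eq_zero_or_pos (α i) with h | h
    · exfalso; have := hαℓ i; rw [h, zero_mul] at this; omega
    · exact h
  have ha_dvd_ℓi : ∀ i j, j ≠ i → a j ∣ ℓi i := fun i j h => by
    rw [hℓi]; exact Finset.dvd_lcm (Finset.mem_erase.mpr ⟨h, Finset.mem_univ j⟩)
  have hea : ∀ i, e i * a i = ℓ := fun i => by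
    rw [he]; exact Nat.div_mul_cancel (hdvd_la i)
  have hℓi_dvd_prod : ∀ i, ℓi i ∣ ∏ j ∈ Finset.univ.erase i, a j := fun i => by
    rw [hℓi]; exact Finset.lcm_dvd fun j hj => Finset.dvd_prod_of_mem a hj
  have hgℓ : g * ℓ = ∏ i, a i := by rw [hg]; exact Nat.div_mul_cancel hdvd_lprod
  have hgpos : 0 < g := by
    rcases Nat.eq_zero_or_pos g with h | h
    · rw [h, zero_mul] at hgℓ; omega
    · exact h
  -- key : g * α i = a i * ((∏ j ≠ i, a j) / ℓi i)
  have key1 : ∀ i, g * α i = a i * ((∏ j ∈ Finset.univ.erase i, a j) / ℓi i) := by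
    intro i
    apply Nat.eq_of_mul_eq_mul_right (hℓi_pos i)
    rw [mul_assoc, hαℓ i, hgℓ, mul_assoc, Nat.div_mul_cancel (hℓi_dvd_prod i),
      Finset.mul_prod_erase _ a (Finset.mem_univ i)]
  have ha_dvd_gα : ∀ i, a i ∣ g * α i := fun i => ⟨_, key1 i⟩
  have hgia : ∀ i, gi i * a i = g * α i := fun i => by
    rw [hgi]; exact Nat.div_mul_cancel (ha_dvd_gα i)
  -- α i ∣ e j for j ≠ i
  have hα_dvd_e : ∀ i j, j ≠ i → α i ∣ e j := by
    intro i j h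
    have : e j = α i * (ℓi i / a j) := by
      rw [he, ← hαℓ i, Nat.mul_div_assoc _ (ha_dvd_ℓi i j h)]
    exact ⟨_, this⟩
  -- pairwise coprimality of α
  have hcop : ∀ i j, i ≠ j → Nat.Coprime (α i) (α j) := by
    intro i j hij
    set d := Nat.gcd (α i) (α j) with hd
    have hdpos : 0 < d := Nat.gcd_pos_of_pos_left _ (hαpos i)
    have h1 : ℓi i * d ∣ ℓ :=
      (Nat.dvd_div_iff_mul_dvd (hℓi_dvd i)).mp (by rw [← hα i]; exact Nat.gcd_dvd_left _ _)
    have h2 : ℓi j * d ∣ ℓ :=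
      (Nat.dvd_div_iff_mul_dvd (hℓi_dvd j)).mp (by rw [← hα j]; exact Nat.gcd_dvd_right _ _)
    have h3 : ℓ ∣ Nat.lcm (ℓi i) (ℓi j) := by
      rw [hℓ]
      refine Finset.lcm_dvd fun k _ => ?_
      by_cases hk : k = i
      · subst hk
        exact dvd_trans (ha_dvd_ℓi j k fun h => hij h) (Nat.dvd_lcm_right _ _)
      · exact dvd_trans (ha_dvd_ℓi i k hk) (Nat.dvd_lcm_left _ _)
    have h4 : Nat.lcm (ℓi i * d) (ℓi j * d) ∣ ℓ := Nat.lcm_dvd h1 h2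
    rw [mul_comm (ℓi i) d, mul_comm (ℓi j) d, Nat.lcm_mul_left] at h4
    have h5 : d * ℓ ∣ ℓ := dvd_trans (mul_dvd_mul_left d h3) h4
    have h6 : d * ℓ ≤ ℓ := Nat.le_of_dvd hℓpos h5
    have : d ≤ 1 := by nlinarith
    omega
  -- N and divisibilities
  set N := (∑ i, e i * β i) + 1 with hN
  have hNpos : 0 < N := by omega
  have hαN : ∀ i, α i ∣ N := by
    intro i
    have hsplit : N = (e i * β i + 1) + ∑ j ∈ Finset.univ.erase i, e j * β j := by
      rw [hN, ← Finset.add_sum_erase _ _ (Finset.mem_univ i)]; ring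
    rw [hsplit]
    exact dvd_add (hβ' i)
      (Finset.dvd_sum fun j hj =>
        dvd_mul_of_dvd_left (hα_dvd_e i j (Finset.mem_erase.mp hj).1) _)
  have hαprodN : (∏ i, α i) ∣ N := by
    have : (∏ i, (α i : ℤ)) ∣ (N : ℤ) := by
      refine Finset.prod_dvd_of_coprime ?_ fun i _ => Int.natCast_dvd_natCast.mpr (hαN i)
      intro i _ j _ hij
      exact Nat.isCoprime_iff_coprime.mpr (hcop i j hij)
    rw [← Nat.cast_prod] at this
    exact_mod_cast this
  have hℓ_dvd_gα : ℓ ∣ g * ∏ i, α i := by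
    rw [hℓ]
    refine Finset.lcm_dvd fun i _ => ?_
    exact dvd_trans (ha_dvd_gα i)
      (mul_dvd_mul_left g (Finset.dvd_prod_of_mem α (Finset.mem_univ i)))
  have hℓ_dvd_gN : ℓ ∣ g * N := dvd_trans hℓ_dvd_gα (mul_dvd_mul_left g hαprodN)
  refine ⟨((g * N / ℓ : ℕ) : ℤ), ?_, ?_⟩
  · exact_mod_cast Nat.div_pos (Nat.le_of_dvd (by positivity) hℓ_dvd_gN) hℓpos
  · have hceq : ((g * N / ℓ : ℕ) : ℚ) = (g : ℚ) * (N : ℚ) / (ℓ : ℚ) := by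
      rw [Nat.cast_div hℓ_dvd_gN hℓ0]; push_cast; ring
    rw [Int.cast_natCast, hceq]
    -- term-wise rewrite of the sum
    have hterm : ∀ i, (gi i : ℚ) * (β i : ℚ) / (α i : ℚ)
        = (g : ℚ) * ((e i * β i : ℕ) : ℚ) / (ℓ : ℚ) := by
      intro i
      have hα0 : (α i : ℚ) ≠ 0 := by exact_mod_cast (hαpos i).ne'
      have h1 : (gi i : ℚ) * (a i : ℚ) = (g : ℚ) * (α i : ℚ) := by
        exact_mod_cast congrArg (Nat.cast : ℕ → ℚ) (hgia i)
      have h2 : (e i : ℚ) * (a i : ℚ) = (ℓ : ℚ) := by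
        exact_mod_cast congrArg (Nat.cast : ℕ → ℚ) (hea i)
      rw [div_eq_div_iff hα0 hℓ0]
      push_cast
      linear_combination (β i : ℚ) * (e i : ℚ) * h1 - (gi i : ℚ) * (β i : ℚ) * h2
    rw [Finset.sum_congr rfl fun i _ => hterm i]
    have hprodcast : (g : ℚ) * (ℓ : ℚ) = ∏ i, (a i : ℚ) := by
      rw [← Nat.cast_prod]; exact_mod_cast congrArg (Nat.cast : ℕ → ℚ) hgℓ
    rw [← hprodcast, ← Finset.sum_div, ← Finset.mul_sum]
    have hNc : ((N : ℕ) : ℚ) = (∑ i, ((e i * β i : ℕ) : ℚ)) + 1 := by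
      rw [hN]; push_cast; ring
    rw [hNc]
    field_simp
end

section
/- The integer (m−2)·ĝ − Σ_{i=1}^m ĝ_i is even and is at least −2 (it equals 2g−2, where g is the genus of the central curve of the minimal good resolution of the Brieskorn complete intersection singularity with exponents a_1,…,a_m). -/
/-!
Write `ĝ(s) = ∏_{i ∈ s} aᵢ / lcm_{i ∈ s} aᵢ`, so that `ĝ = ĝ(all)` and `ĝᵢ = ĝ(all ∖ {i})`.

Parity: `v₂(ĝ(s)) = ∑_{i ∈ s} v₂(aᵢ) - max_{i ∈ s} v₂(aᵢ)`, so `ĝ(s)` is odd exactly when at most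
one `aᵢ` with `i ∈ s` is even. If at most one `aᵢ` is even, `ĝ` and every `ĝᵢ` are odd; otherwise
`ĝ` is even and the number of odd `ĝᵢ` is `2` or `0`.

Bound: `nᵢ = gcd(aᵢ, ℓᵢ)` satisfies `ĝ = nᵢ ĝᵢ` and, comparing valuations prime by prime,
`ĝ · lcm(n) = ∏ nᵢ`. The quantity is then the Riemann–Hurwitz count `ĝ (∑ (1 - 1/nᵢ) - 2)`: it is
nonnegative when at least four `nᵢ` exceed `1`, and otherwise reduces to
`xy + yz + zx ≤ xyz + 2 lcm(n)` for the (at most) three remaining orders.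
-/

open Finset

variable {ι : Type*}

theorem Finset.sum_le_sup_iff_card_filter_ne_zero_le_one (s : Finset ι) (f : ι → ℕ) :
    ∑ i ∈ s, f i ≤ s.sup f ↔ #{i ∈ s | f i ≠ 0} ≤ 1 := by
  classical
  constructor
  · intro hle
    by_contra! htwo
    obtain ⟨x, hx, y, hy, hxy⟩ := one_lt_card.1 htwo
    obtain ⟨i₀, hi₀, hsup⟩ := exists_mem_eq_sup s ⟨x, (mem_filter.1 hx).1⟩ f
    obtain ⟨j, hj, hji₀⟩ : ∃ j ∈ ({x, y} : Finset ι), j ≠ i₀ := by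
      by_cases h : x = i₀
      · exact ⟨y, by simp, fun h' => hxy (h.trans h'.symm)⟩
      · exact ⟨x, by simp, h⟩
    have hjs : j ∈ {i ∈ s | f i ≠ 0} := by
      rcases mem_insert.1 hj with rfl | hj <;> simp_all
    have hpair : f i₀ + f j ≤ ∑ i ∈ s, f i := by
      rw [← sum_pair hji₀.symm]
      exact sum_le_sum_of_subset (insert_subset hi₀ (singleton_subset_iff.2 (mem_filter.1 hjs).1))
    have := (mem_filter.1 hjs).2
    omega
  · intro hone
    rw [← sum_filter_ne_zero]
    rcases eq_empty_or_nonempty {i ∈ s | f i ≠ 0} with hempty | ⟨x, hx⟩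
    · simp [hempty]
    · rw [eq_singleton_iff_unique_mem.2 ⟨hx, fun y hy => card_le_one.1 hone y hy x hx⟩,
        sum_singleton]
      exact le_sup (mem_filter.1 hx).1

theorem Finset.sum_add_sup_min_sup_erase [Fintype ι] [DecidableEq ι] (v : ι → ℕ) :
    ∑ i, v i + univ.sup (fun i => min (v i) ((univ.erase i).sup v)) =
      ∑ i, min (v i) ((univ.erase i).sup v) + univ.sup v := by
  cases isEmpty_or_nonempty ι
  · simp
  obtain ⟨i₀, -, hi₀⟩ := exists_mem_eq_sup univ univ_nonempty v
  have hle : (univ.erase i₀).sup v ≤ v i₀ := hi₀ ▸ sup_mono (erase_subset _ _)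
  have hmin : ∀ i ∈ univ.erase i₀, min (v i) ((univ.erase i).sup v) = v i := fun i hi =>
    min_eq_left ((le_sup (mem_univ i)).trans
      (hi₀ ▸ le_sup (mem_erase.2 ⟨(ne_of_mem_erase hi).symm, mem_univ i₀⟩)))
  have hsup : univ.sup (fun i => min (v i) ((univ.erase i).sup v)) = (univ.erase i₀).sup v := by
    refine le_antisymm (Finset.sup_le fun i _ => ?_) ?_
    · by_cases h : i = i₀
      · exact h ▸ min_le_right _ _
      · exact (min_le_left _ _).trans (le_sup (mem_erase.2 ⟨h, mem_univ i⟩))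
    · exact (min_eq_right hle).symm.trans_le
        (le_sup (f := fun i => min (v i) ((univ.erase i).sup v)) (mem_univ i₀))
  rw [hsup, ← add_sum_erase univ v (mem_univ i₀),
    ← add_sum_erase univ (fun i => min (v i) ((univ.erase i).sup v)) (mem_univ i₀),
    sum_congr rfl hmin, min_eq_right hle, hi₀]
  ring

theorem mul_add_mul_add_mul_le_mul_mul_add_two_mul {x y z L : ℤ} (hx : 1 ≤ x) (hy : 1 ≤ y)
    (hz : 1 ≤ z) (hxL : x ≤ L) (hyL : y ≤ L) (hzL : z ≤ L) :
    x * y + y * z + z * x ≤ x * y * z + 2 * L := by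
  wlog hxy : x ≤ y generalizing x y
  · linarith [this hy hx hyL hxL (le_of_not_ge hxy)]
  wlog hyz : y ≤ z generalizing x y z
  · rcases le_total x z with hxz | hzx
    · linarith [this hy hyL hx hz hxL hzL hxz (le_of_not_ge hyz)]
    · linarith [this hy hyL hz hx hzL hxL hzx hxy]
  rcases eq_or_lt_of_le hx with rfl | hx
  · nlinarith
  · nlinarith [mul_nonneg (mul_nonneg (by linarith : (0:ℤ) ≤ y) (by linarith : (0:ℤ) ≤ x - 1))
        (by linarith : (0:ℤ) ≤ y - 2),
      mul_le_mul_of_nonneg_right hyz (by nlinarith : (0:ℤ) ≤ (x - 1) * (y - 1) + 1)]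

section RiemannHurwitz

variable [Fintype ι] {n gi : ι → ℕ} {g L : ℕ}

theorem sum_le_card_sub_two_mul_of_four_le_card (hgi : ∀ i, gi i * n i = g)
    (hn : ∀ i, 0 < n i) (hfour : 4 ≤ #{i | 2 ≤ n i}) :
    (∑ i, gi i : ℤ) ≤ (Fintype.card ι - 2) * g := by
  have hle : ∀ i, (gi i : ℤ) ≤ g := fun i => by
    rw [← hgi i]; exact_mod_cast Nat.le_mul_of_pos_right _ (hn i)
  have hhalf : ∀ i ∈ ({i | 2 ≤ n i} : Finset ι), (g : ℤ) ≤ 2 * (g - gi i) := fun i hi => by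
    have h2 : (2 : ℤ) ≤ n i := by exact_mod_cast (mem_filter.1 hi).2
    have hgi' : (gi i : ℤ) * n i = g := by exact_mod_cast hgi i
    nlinarith [(gi i).cast_nonneg (α := ℤ)]
  have hdefect : 4 * (g : ℤ) ≤ 2 * ∑ i, ((g : ℤ) - gi i) :=
    calc 4 * (g : ℤ) ≤ #{i | 2 ≤ n i} * g := by gcongr; exact_mod_cast hfour
      _ = ∑ i ∈ {i | 2 ≤ n i}, (g : ℤ) := by simp
      _ ≤ ∑ i ∈ {i | 2 ≤ n i}, 2 * ((g : ℤ) - gi i) := sum_le_sum hhalf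
      _ ≤ ∑ i, 2 * ((g : ℤ) - gi i) :=
        sum_le_sum_of_subset_of_nonneg (subset_univ _) fun i _ _ => by linarith [hle i]
      _ = 2 * ∑ i, ((g : ℤ) - gi i) := (mul_sum ..).symm
  rw [sum_sub_distrib, sum_const, card_univ, nsmul_eq_mul] at hdefect
  linarith

theorem sum_le_add_two_of_card_eq_three {T : Finset ι} (hT : #T = 3)
    (hgi : ∀ i, gi i * n i = g) (hn : ∀ i, 0 < n i) (hnT : ∀ i ∉ T, n i = 1)
    (hnL : ∀ i, n i ≤ L) (hgL : g * L = ∏ i, n i) :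
    (∑ i, gi i : ℤ) ≤ (Fintype.card ι - 2) * g + 2 := by
  classical
  obtain ⟨x, y, z, hxy, hxz, hyz, rfl⟩ := card_eq_three.1 hT
  have hprod : ∏ i, n i = n x * n y * n z := by
    rw [← prod_subset (subset_univ _) fun i _ hi => hnT i hi, prod_insert (by simp [hxy, hxz]),
      prod_pair hyz, mul_assoc]
  have hgiT : ∀ i ∈ univ \ {x, y, z}, (gi i : ℤ) = g := fun i hi => by
    rw [← hgi i, hnT i (mem_sdiff.1 hi).2, mul_one]
  have hrest : ∑ i ∈ univ \ {x, y, z}, (gi i : ℤ) = (Fintype.card ι - 3) * g := by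
    rw [sum_congr rfl hgiT,
      sum_const, card_sdiff_of_subset (subset_univ _), card_univ, hT, nsmul_eq_mul,
      Nat.cast_sub (by simpa [hT] using card_le_univ {x, y, z})]
    norm_num
  have hgi' : ∀ i, (gi i : ℤ) * n i = g := fun i => by exact_mod_cast hgi i
  have hgL' : (g : ℤ) * L = n x * n y * n z := by exact_mod_cast hgL.trans hprod
  have hn' : ∀ i, (n i : ℤ) ≠ 0 := fun i => by exact_mod_cast (hn i).ne'
  have hgx : (gi x : ℤ) * L = n y * n z :=
    mul_left_cancel₀ (hn' x) (by linear_combination (L : ℤ) * hgi' x + hgL')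
  have hgy : (gi y : ℤ) * L = n x * n z :=
    mul_left_cancel₀ (hn' y) (by linear_combination (L : ℤ) * hgi' y + hgL')
  have hgz : (gi z : ℤ) * L = n x * n y :=
    mul_left_cancel₀ (hn' z) (by linear_combination (L : ℤ) * hgi' z + hgL')
  have hone : ∀ i, (1 : ℤ) ≤ n i := fun i => by exact_mod_cast hn i
  have hle : ∀ i, (n i : ℤ) ≤ L := fun i => by exact_mod_cast hnL i
  have htriple : ((gi x + gi y + gi z : ℕ) : ℤ) ≤ g + 2 := by
    refine le_of_mul_le_mul_right ?_ (lt_of_lt_of_le one_pos ((hone x).trans (hle x)))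
    have := mul_add_mul_add_mul_le_mul_mul_add_two_mul (hone x) (hone y) (hone z)
      (hle x) (hle y) (hle z)
    push_cast
    linarith
  rw [← sum_sdiff (subset_univ {x, y, z}), hrest, sum_insert (by simp [hxy, hxz]), sum_pair hyz]
  push_cast at htriple
  linarith

theorem sum_le_card_sub_two_mul_add_two (hcard : 3 ≤ Fintype.card ι)
    (hgi : ∀ i, gi i * n i = g) (hn : ∀ i, 0 < n i) (hnL : ∀ i, n i ≤ L)
    (hgL : g * L = ∏ i, n i) :
    (∑ i, gi i : ℤ) ≤ (Fintype.card ι - 2) * g + 2 := by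
  by_cases hfour : 4 ≤ #{i | 2 ≤ n i}
  · linarith [sum_le_card_sub_two_mul_of_four_le_card hgi hn hfour]
  · obtain ⟨T, hST, hT⟩ := exists_superset_card_eq (by omega : #{i | 2 ≤ n i} ≤ 3) hcard
    refine sum_le_add_two_of_card_eq_three hT hgi hn (fun i hi => ?_) hnL hgL
    have : ¬ 2 ≤ n i := fun h => hi (hST (by simp [h]))
    have := hn i
    omega

end RiemannHurwitz

def prodDivLcm (s : Finset ι) (a : ι → ℕ) : ℕ := (∏ i ∈ s, a i) / s.lcm a

section prodDivLcm

variable {s : Finset ι} {a : ι → ℕ}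

theorem prodDivLcm_mul_lcm (s : Finset ι) (a : ι → ℕ) : prodDivLcm s a * s.lcm a = ∏ i ∈ s, a i :=
  Nat.div_mul_cancel (s.lcm_dvd_prod a)

theorem prodDivLcm_ne_zero (ha : ∀ i ∈ s, a i ≠ 0) : prodDivLcm s a ≠ 0 :=
  left_ne_zero_of_mul ((prodDivLcm_mul_lcm s a).trans_ne (prod_ne_zero_iff.2 ha))

theorem prodDivLcm_insert [DecidableEq ι] {x : ι} (hx : x ∉ s) (ha : ∀ i ∈ insert x s, a i ≠ 0) :
    prodDivLcm (insert x s) a = prodDivLcm s a * Nat.gcd (a x) (s.lcm a) := by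
  refine Nat.eq_of_mul_eq_mul_right (Nat.pos_of_ne_zero (lcm_ne_zero_iff.2 ha)) ?_
  rw [prodDivLcm_mul_lcm, prod_insert hx, lcm_insert, lcm_eq_nat_lcm, mul_assoc, Nat.gcd_mul_lcm,
    ← prodDivLcm_mul_lcm s a]
  ring

theorem factorization_prodDivLcm (ha : ∀ i ∈ s, a i ≠ 0) (p : ℕ) :
    (prodDivLcm s a).factorization p =
      ∑ i ∈ s, (a i).factorization p - s.sup fun i => (a i).factorization p := by
  rw [prodDivLcm, Nat.factorization_div (s.lcm_dvd_prod a), Finsupp.tsub_apply,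
    Nat.factorization_prod ha, sum_apply', factorization_lcm ha]

theorem odd_prodDivLcm_iff (ha : ∀ i ∈ s, a i ≠ 0) :
    Odd (prodDivLcm s a) ↔ #{i ∈ s | Even (a i)} ≤ 1 := by
  have hval : ∀ i ∈ s, (a i).factorization 2 ≠ 0 ↔ Even (a i) := fun i hi => by
    rw [even_iff_two_dvd, Nat.Prime.dvd_iff_one_le_factorization Nat.prime_two (ha i hi)]
    omega
  rw [← Nat.not_even_iff_odd, even_iff_two_dvd,
    Nat.Prime.dvd_iff_one_le_factorization Nat.prime_two (prodDivLcm_ne_zero ha),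
    factorization_prodDivLcm ha, ← filter_congr hval,
    ← sum_le_sup_iff_card_filter_ne_zero_le_one]
  omega

end prodDivLcm

theorem prodDivLcm_mul_lcm_div_lcm_erase_div [Fintype ι] [DecidableEq ι] {a : ι → ℕ}
    (ha : ∀ i, a i ≠ 0) (i : ι) :
    prodDivLcm univ a * (univ.lcm a / (univ.erase i).lcm a) / a i =
      prodDivLcm (univ.erase i) a := by
  have hℓi : (univ.erase i).lcm a ≠ 0 := lcm_ne_zero_iff.2 fun j _ => ha j
  have hdvd : (univ.erase i).lcm a ∣ univ.lcm a := lcm_mono (erase_subset i univ)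
  have hmul : prodDivLcm univ a * (univ.lcm a / (univ.erase i).lcm a) =
      a i * prodDivLcm (univ.erase i) a := by
    refine Nat.eq_of_mul_eq_mul_right (Nat.pos_of_ne_zero hℓi) ?_
    rw [mul_assoc, Nat.div_mul_cancel hdvd, prodDivLcm_mul_lcm, mul_assoc, prodDivLcm_mul_lcm,
      mul_prod_erase _ _ (mem_univ i)]
  rw [hmul, Nat.mul_div_cancel_left _ (Nat.pos_of_ne_zero (ha i))]

theorem even_card_sub_two_mul_prodDivLcm_sub_sum_erase [Fintype ι] [DecidableEq ι] {a : ι → ℕ}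
    (ha : ∀ i, a i ≠ 0) :
    Even (((Fintype.card ι : ℤ) - 2) * prodDivLcm univ a -
      ∑ i, (prodDivLcm (univ.erase i) a : ℤ)) := by
  set E : Finset ι := {i | Even (a i)}
  have hodd : ∀ i, Odd (prodDivLcm (univ.erase i) a) ↔ #(E.erase i) ≤ 1 := fun i => by
    rw [odd_prodDivLcm_iff fun j _ => ha j, ← filter_erase]
  have hsum : Even (∑ i, (prodDivLcm (univ.erase i) a : ℤ)) ↔ Even #{i | #(E.erase i) ≤ 1} := by
    rw [← Nat.cast_sum, Int.even_coe_nat, even_sum_iff_even_card_odd]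
    simp only [hodd]
  suffices Even ((Fintype.card ι : ℤ) * prodDivLcm univ a -
      ∑ i, (prodDivLcm (univ.erase i) a : ℤ)) by
    have := this.sub (even_two_mul (prodDivLcm univ a : ℤ))
    rwa [sub_right_comm, ← sub_mul] at this
  rw [Int.even_sub, hsum]
  rcases le_or_gt #E 1 with hE | hE
  · have hG : Odd (prodDivLcm univ a) := (odd_prodDivLcm_iff fun j _ => ha j).2 hE
    rw [filter_true_of_mem fun i _ => (card_erase_le).trans hE, card_univ, Int.even_mul,
      Int.even_coe_nat, Int.even_coe_nat]
    exact or_iff_left (Nat.not_even_iff_odd.2 hG)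
  · have hG : Even (prodDivLcm univ a) := by
      rw [← Nat.not_odd_iff_even, odd_prodDivLcm_iff fun j _ => ha j]
      exact hE.not_ge
    refine iff_of_true (Int.even_mul.2 (Or.inr (Int.even_coe_nat _ |>.2 hG))) ?_
    by_cases h2 : #E = 2
    · have : ({i | #(E.erase i) ≤ 1} : Finset ι) = E := by
        ext i
        by_cases hi : i ∈ E
        · simp [hi, card_erase_of_mem, h2]
        · simp [hi, erase_eq_of_notMem, h2]
      rw [this, h2]
      exact even_two
    · rw [filter_false_of_mem fun i _ => ?_, card_empty]
      · exact Even.zero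
      · by_cases hi : i ∈ E
        · rw [card_erase_of_mem hi]; omega
        · rw [erase_eq_of_notMem hi]; omega

/-- The ratio `ĝ / ĝᵢ`: the ramification order of the central curve over the `i`-th branch
point of its quotient `ℙ¹`. -/
def branchOrder [Fintype ι] [DecidableEq ι] (a : ι → ℕ) (i : ι) : ℕ :=
  Nat.gcd (a i) ((univ.erase i).lcm a)

section branchOrder

variable [Fintype ι] [DecidableEq ι] {a : ι → ℕ}

theorem branchOrder_pos (ha : ∀ i, a i ≠ 0) (i : ι) : 0 < branchOrder a i :=
  Nat.gcd_pos_of_pos_left ((univ.erase i).lcm a) (Nat.pos_of_ne_zero (ha i))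

theorem prodDivLcm_erase_mul_branchOrder (ha : ∀ i, a i ≠ 0) (i : ι) :
    prodDivLcm (univ.erase i) a * branchOrder a i = prodDivLcm univ a := by
  rw [branchOrder, ← prodDivLcm_insert (notMem_erase i univ) fun j _ => ha j,
    insert_erase (mem_univ i)]

theorem prodDivLcm_mul_lcm_branchOrder (ha : ∀ i, a i ≠ 0) :
    prodDivLcm univ a * univ.lcm (branchOrder a) = ∏ i, branchOrder a i := by
  have ha' : ∀ i ∈ univ, a i ≠ 0 := fun i _ => ha i
  have hn : ∀ i ∈ univ, branchOrder a i ≠ 0 := fun i _ => (branchOrder_pos ha i).ne'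
  have hval : ∀ p i, (branchOrder a i).factorization p =
      min ((a i).factorization p) ((univ.erase i).sup fun j => (a j).factorization p) :=
    fun p i => by
      rw [branchOrder, Nat.factorization_gcd (ha i) (lcm_ne_zero_iff.2 fun j _ => ha j),
        Finsupp.inf_apply, factorization_lcm fun j _ => ha j]
  have hcross : (∏ i, a i) * univ.lcm (branchOrder a) = (∏ i, branchOrder a i) * univ.lcm a := by
    refine Nat.eq_of_factorization_eq
      (mul_ne_zero (prod_ne_zero_iff.2 ha') (lcm_ne_zero_iff.2 hn))
      (mul_ne_zero (prod_ne_zero_iff.2 hn) (lcm_ne_zero_iff.2 ha')) fun p => ?_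
    rw [Nat.factorization_mul (prod_ne_zero_iff.2 ha') (lcm_ne_zero_iff.2 hn),
      Nat.factorization_mul (prod_ne_zero_iff.2 hn) (lcm_ne_zero_iff.2 ha'), Finsupp.add_apply,
      Finsupp.add_apply, Nat.factorization_prod ha', Nat.factorization_prod hn, sum_apply',
      sum_apply', factorization_lcm hn, factorization_lcm ha']
    simp only [hval]
    exact sum_add_sup_min_sup_erase _
  refine Nat.eq_of_mul_eq_mul_right (Nat.pos_of_ne_zero (lcm_ne_zero_iff.2 ha')) ?_
  rw [mul_right_comm, prodDivLcm_mul_lcm, hcross]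

theorem sum_prodDivLcm_erase_le (hcard : 3 ≤ Fintype.card ι) (ha : ∀ i, a i ≠ 0) :
    (∑ i, (prodDivLcm (univ.erase i) a : ℤ)) ≤ (Fintype.card ι - 2) * prodDivLcm univ a + 2 :=
  sum_le_card_sub_two_mul_add_two hcard (prodDivLcm_erase_mul_branchOrder ha)
    (branchOrder_pos ha)
    (fun i => Nat.le_of_dvd (Nat.pos_of_ne_zero (lcm_ne_zero_iff.2 fun j _ =>
      (branchOrder_pos ha j).ne')) (dvd_lcm (mem_univ i)))
    (prodDivLcm_mul_lcm_branchOrder ha)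

end branchOrder

theorem brieskorn_central_genus_general
    (m : ℕ) (hm : 3 ≤ m) (a : Fin m → ℕ)
    (ha : ∀ i, 2 ≤ a i)
    (ℓ : ℕ) (hℓ : ℓ = Finset.univ.lcm a)
    (ℓi : Fin m → ℕ) (hℓi : ∀ i, ℓi i = (Finset.univ.erase i).lcm a)
    (α : Fin m → ℕ) (hα : ∀ i, α i = ℓ / ℓi i)
    (g : ℕ) (hg : g = (∏ i, a i) / ℓ)
    (gi : Fin m → ℕ) (hgi : ∀ i, gi i = g * α i / a i) :
    Even (((m : ℤ) - 2) * (g : ℤ) - ∑ i, (gi i : ℤ)) ∧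
    (-2 : ℤ) ≤ ((m : ℤ) - 2) * (g : ℤ) - ∑ i, (gi i : ℤ) := by
  have ha0 : ∀ i, a i ≠ 0 := fun i => (lt_of_lt_of_le two_pos (ha i)).ne'
  obtain rfl : gi = fun i => prodDivLcm (univ.erase i) a := funext fun i => by
    rw [hgi, hα, hℓi, hg, hℓ]
    exact prodDivLcm_mul_lcm_div_lcm_erase_div ha0 i
  obtain rfl : g = prodDivLcm univ a := by rw [hg, hℓ]; rfl
  have heven := even_card_sub_two_mul_prodDivLcm_sub_sum_erase ha0
  have hle := sum_prodDivLcm_erase_le (by rwa [Fintype.card_fin]) ha0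
  rw [Fintype.card_fin] at heven hle
  exact ⟨heven, by linarith⟩

/-- The integer `(m-2)·ĝ − Σ_i ĝ i` is even and at least `−2`
(it equals `2g − 2` where `g` is the genus of the central curve). -/
theorem brieskorn_central_genus
    (m : ℕ) (hm : 3 ≤ m) (a : Fin m → ℕ)
    (ha : ∀ i, 2 ≤ a i) (hmono : Monotone a)
    (ℓ : ℕ) (hℓ : ℓ = Finset.univ.lcm a)
    (ℓi : Fin m → ℕ) (hℓi : ∀ i, ℓi i = (Finset.univ.erase i).lcm a)
    (α : Fin m → ℕ) (hα : ∀ i, α i = ℓ / ℓi i)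
    (g : ℕ) (hg : g = (∏ i, a i) / ℓ)
    (gi : Fin m → ℕ) (hgi : ∀ i, gi i = g * α i / a i) :
    Even (((m : ℤ) - 2) * (g : ℤ) - ∑ i, (gi i : ℤ)) ∧
    (-2 : ℤ) ≤ ((m : ℤ) - 2) * (g : ℤ) - ∑ i, (gi i : ℤ) :=
  brieskorn_central_genus_general m hm a ha ℓ hℓ ℓi hℓi α hα g hg gi hgi
end

section
/- For every integer n ≥ 0, n belongs to the numerical semigroup ⟨e_1,…,e_m⟩ if and only if deg D_n belongs to the numerical semigroup ⟨ĝ_1,…,ĝ_m⟩; that is, there exist nonnegative integers c_1,…,c_m with n = Σ c_i e_i if and only if there exist nonnegative integers c_1',…,c_m' with deg D_n = Σ c_i' ĝ_i. -/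
theorem aux_compl (x k : ℕ) (hk : 0 < k) : ∃ r, r < k ∧ k ∣ x + r := by
  refine ⟨(k - x % k) % k, Nat.mod_lt _ hk, ?_⟩
  have h1 : x % k < k := Nat.mod_lt _ hk
  have h4 : x % k ≤ x := Nat.mod_le x k
  obtain ⟨t, ht⟩ := (Nat.dvd_sub_mod x : k ∣ x - x % k)
  rcases Nat.eq_zero_or_pos (x % k) with h | h
  · simp [h]
    exact Nat.dvd_of_mod_eq_zero h
  · have h2 : (k - x % k) % k = k - x % k := Nat.mod_eq_of_lt (by omega)
    rw [h2]
    have h3 : k * (t + 1) = k * t + k := by ring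
    exact ⟨t + 1, by omega⟩

/-- `n ∈ ⟨e 1, …, e m⟩` if and only if `deg D_n ∈ ⟨ĝ 1, …, ĝ m⟩`. -/
theorem brieskorn_semigroup_iff
    (m : ℕ) (hm : 3 ≤ m) (a : Fin m → ℕ)
    (ha : ∀ i, 2 ≤ a i) (hmono : Monotone a)
    (ℓ : ℕ) (hℓ : ℓ = Finset.univ.lcm a)
    (ℓi : Fin m → ℕ) (hℓi : ∀ i, ℓi i = (Finset.univ.erase i).lcm a)
    (α : Fin m → ℕ) (hα : ∀ i, α i = ℓ / ℓi i)
    (αp : ℕ) (hαp : αp = ∏ i, α i)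
    (e : Fin m → ℕ) (he : ∀ i, e i = ℓ / a i)
    (g : ℕ) (hg : g = (∏ i, a i) / ℓ)
    (gi : Fin m → ℕ) (hgi : ∀ i, gi i = g * α i / a i)
    (β : Fin m → ℕ) (hβ : ∀ i, β i < α i) (hβ' : ∀ i, α i ∣ e i * β i + 1)
    (c₀ : ℤ) (hc₀pos : 0 < c₀)
    (hc₀ : (c₀ : ℚ) = (∑ i, (gi i : ℚ) * (β i : ℚ) / (α i : ℚ))
        + (∏ i, (a i : ℚ)) / (ℓ : ℚ) ^ 2)
    (degD : ℕ → ℤ)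
    (hdegD : ∀ n : ℕ, degD n
        = (n : ℤ) * c₀ - ∑ i, (gi i : ℤ) * ⌈((n : ℚ) * (β i : ℚ)) / (α i : ℚ)⌉)
    :
    ∀ n : ℕ,
      (∃ c : Fin m → ℕ, n = ∑ i, c i * e i) ↔
      (∃ c' : Fin m → ℕ, degD n = ∑ i, (c' i : ℤ) * (gi i : ℤ)) := by
  -- basic positivity
  have hapos : ∀ i, 0 < a i := fun i => by have := ha i; omega
  have hppos : 0 < ∏ i, a i := Finset.prod_pos fun i _ => hapos i
  have hℓdvdp : ℓ ∣ ∏ i, a i := by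
    rw [hℓ]; exact Finset.lcm_dvd fun i _ => Finset.dvd_prod_of_mem a (Finset.mem_univ i)
  have hℓpos : 0 < ℓ := Nat.pos_of_dvd_of_pos hℓdvdp hppos
  have hadvdℓ : ∀ i, a i ∣ ℓ := fun i => by rw [hℓ]; exact Finset.dvd_lcm (Finset.mem_univ i)
  have hℓidvdℓ : ∀ i, ℓi i ∣ ℓ := fun i => by
    rw [hℓi, hℓ]
    exact Finset.lcm_dvd fun j hj => Finset.dvd_lcm (Finset.mem_univ j)
  have hℓipos : ∀ i, 0 < ℓi i := fun i => Nat.pos_of_dvd_of_pos (hℓidvdℓ i) hℓpos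
  have hea : ∀ i, e i * a i = ℓ := fun i => by rw [he]; exact Nat.div_mul_cancel (hadvdℓ i)
  have hαℓ : ∀ i, α i * ℓi i = ℓ := fun i => by rw [hα]; exact Nat.div_mul_cancel (hℓidvdℓ i)
  have hαpos : ∀ i, 0 < α i := fun i =>
    Nat.pos_of_dvd_of_pos ⟨ℓi i, (hαℓ i).symm⟩ hℓpos
  have hgℓ : g * ℓ = ∏ i, a i := by rw [hg]; exact Nat.div_mul_cancel hℓdvdp
  -- a i * ℓi i ∣ ∏ a
  have haℓi : ∀ i, a i * ℓi i ∣ ∏ j, a j := by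
    intro i
    have h1 : ℓi i ∣ ∏ j ∈ Finset.univ.erase i, a j := by
      rw [hℓi]
      exact Finset.lcm_dvd fun j hj => Finset.dvd_prod_of_mem a hj
    have h2 : a i * ∏ j ∈ Finset.univ.erase i, a j = ∏ j, a j :=
      Finset.mul_prod_erase _ _ (Finset.mem_univ i)
    exact h2 ▸ mul_dvd_mul_left (a i) h1
  -- a i ∣ g * α i
  have hgia : ∀ i, gi i * a i = g * α i := by
    intro i
    rw [hgi]
    refine Nat.div_mul_cancel ?_
    obtain ⟨t, ht⟩ := haℓi i
    have h1 : g * α i * ℓi i = ∏ j, a j := by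
      rw [mul_assoc, hαℓ, hgℓ]
    refine ⟨t, Nat.eq_of_mul_eq_mul_right (hℓipos i) ?_⟩
    rw [h1, ht]; ring
  -- key: gi i * ℓ² = (∏ a) * (α i * e i)
  have hgiℓ : ∀ i, gi i * ℓ ^ 2 = (∏ j, a j) * (α i * e i) := by
    intro i
    have h : gi i * ℓ ^ 2 = gi i * a i * (e i * ℓ) := by
      rw [pow_two]; nth_rewrite 1 [← hea i]; ring
    rw [h, hgia i, ← hgℓ]; ring
  -- α i ∣ e j for j ≠ i
  have hαe : ∀ i j, j ≠ i → α i ∣ e j := by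
    intro i j hji
    have hja : a j ∣ ℓi i := by
      rw [hℓi]
      exact Finset.dvd_lcm (Finset.mem_erase.2 ⟨hji, Finset.mem_univ j⟩)
    obtain ⟨u, hu⟩ := hja
    refine ⟨u, Nat.eq_of_mul_eq_mul_right (hapos j) ?_⟩
    rw [hea j, ← hαℓ i, hu]; ring
  -- casts
  have hℓQ : ((ℓ : ℚ)) ≠ 0 := by positivity
  have hαQ : ∀ i, ((α i : ℚ)) ≠ 0 := fun i => by
    have := hαpos i; positivity
  have hpZ : (∏ i, (a i : ℤ)) ≠ 0 := by
    have h : ((∏ i, a i : ℕ) : ℤ) ≠ 0 := by exact_mod_cast hppos.ne'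
    rwa [Nat.cast_prod] at h
  have hgiℓQ : ∀ i, (gi i : ℚ) * (ℓ : ℚ) ^ 2
      = (∏ j, (a j : ℚ)) * ((α i : ℚ) * (e i : ℚ)) := fun i => by
    exact_mod_cast congrArg (fun t : ℕ => (t : ℚ)) (hgiℓ i)
  have hgiℓZ : ∀ i, (gi i : ℤ) * (ℓ : ℤ) ^ 2
      = (∏ j, (a j : ℤ)) * ((α i : ℤ) * (e i : ℤ)) := fun i => by
    exact_mod_cast congrArg (fun t : ℕ => (t : ℤ)) (hgiℓ i)
  have hL2 : ((ℓ : ℤ)) ^ 2 ≠ 0 := by positivity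
  intro n
  -- choose r i with r i < α i and α i ∣ n * β i + r i
  have hrex : ∀ i, ∃ r, r < α i ∧ α i ∣ n * β i + r := fun i => aux_compl _ _ (hαpos i)
  choose r hrlt hrdvd using hrex
  set s : Fin m → ℕ := fun i => (n * β i + r i) / α i with hs_def
  have hs : ∀ i, α i * s i = n * β i + r i := fun i => Nat.mul_div_cancel' (hrdvd i)
  -- ceiling identity
  have hceil : ∀ i, ⌈((n : ℚ) * (β i : ℚ)) / (α i : ℚ)⌉ = (s i : ℤ) := by
    intro i
    have hαQ' : (0 : ℚ) < (α i : ℚ) := by exact_mod_cast hαpos i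
    have hsq : (α i : ℚ) * (s i : ℚ) = (n : ℚ) * (β i : ℚ) + (r i : ℚ) := by
      exact_mod_cast hs i
    have hrq : (r i : ℚ) < (α i : ℚ) := by exact_mod_cast hrlt i
    have hrq0 : (0 : ℚ) ≤ (r i : ℚ) := by positivity
    rw [Int.ceil_eq_iff]
    constructor
    · rw [lt_div_iff₀ hαQ']
      push_cast
      nlinarith
    · rw [div_le_iff₀ hαQ']
      push_cast
      nlinarith
  -- degD in ℚ
  have hdq : (degD n : ℚ) = (n : ℚ) * (c₀ : ℚ) - ∑ i, (gi i : ℚ) * (s i : ℚ) := by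
    rw [hdegD n]
    push_cast [hceil]
    ring
  have hc₀' : (ℓ : ℚ) ^ 2 * (c₀ : ℚ)
      = (ℓ : ℚ) ^ 2 * (∑ i, (gi i : ℚ) * (β i : ℚ) / (α i : ℚ)) + ∏ i, (a i : ℚ) := by
    rw [hc₀, mul_add]
    congr 1
    rw [mul_comm, div_mul_cancel₀ _ (pow_ne_zero 2 hℓQ)]
  have e1 : (ℓ : ℚ) ^ 2 * (∑ i, (gi i : ℚ) * (β i : ℚ) / (α i : ℚ))
      = ∑ i, (∏ j, (a j : ℚ)) * ((e i : ℚ) * (β i : ℚ)) := by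
    rw [Finset.mul_sum]
    refine Finset.sum_congr rfl fun i _ => ?_
    rw [mul_div_assoc', div_eq_iff (hαQ i)]
    linear_combination (β i : ℚ) * hgiℓQ i
  have e2 : (ℓ : ℚ) ^ 2 * (∑ i, (gi i : ℚ) * (s i : ℚ))
      = (n : ℚ) * ∑ i, (∏ j, (a j : ℚ)) * ((e i : ℚ) * (β i : ℚ))
        + ∑ i, (∏ j, (a j : ℚ)) * ((e i : ℚ) * (r i : ℚ)) := by
    rw [Finset.mul_sum, Finset.mul_sum, ← Finset.sum_add_distrib]
    refine Finset.sum_congr rfl fun i _ => ?_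
    have hsq : (α i : ℚ) * (s i : ℚ) = (n : ℚ) * (β i : ℚ) + (r i : ℚ) := by
      exact_mod_cast hs i
    linear_combination (s i : ℚ) * hgiℓQ i + (∏ j, (a j : ℚ)) * (e i : ℚ) * hsq
  have e3 : (∏ j, (a j : ℚ)) * (∑ i, (r i : ℚ) * (e i : ℚ))
      = ∑ i, (∏ j, (a j : ℚ)) * ((e i : ℚ) * (r i : ℚ)) := by
    rw [Finset.mul_sum]
    exact Finset.sum_congr rfl fun i _ => by ring
  have key : (ℓ : ℚ) ^ 2 * (degD n : ℚ)
      = (∏ j, (a j : ℚ)) * ((n : ℚ) - ∑ i, (r i : ℚ) * (e i : ℚ)) := by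
    linear_combination (ℓ : ℚ) ^ 2 * hdq + (n : ℚ) * hc₀' + (n : ℚ) * e1 - e2 + e3
  have masterZ : (ℓ : ℤ) ^ 2 * degD n
      = (∏ i, (a i : ℤ)) * ((n : ℤ) - ∑ i, (r i : ℤ) * (e i : ℤ)) := by
    have h : ((((ℓ : ℤ) ^ 2 * degD n) : ℤ) : ℚ)
        = (((∏ i, (a i : ℤ)) * ((n : ℤ) - ∑ i, (r i : ℤ) * (e i : ℤ)) : ℤ) : ℚ) := by
      push_cast
      rw [key]
    exact_mod_cast h
  constructor
  · rintro ⟨c, hc⟩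
    -- show r i = c i % α i
    have hri : ∀ i, r i = c i % α i := by
      intro i
      have hdc : α i ∣ n * β i + c i := by
        have hsplit : n * β i + c i
            = c i * (e i * β i + 1) + ∑ j ∈ Finset.univ.erase i, c j * e j * β i := by
          conv_lhs => rw [hc]
          rw [Finset.sum_mul, ← Finset.add_sum_erase _ _ (Finset.mem_univ i)]
          ring
        rw [hsplit]
        refine dvd_add ((hβ' i).mul_left (c i)) (Finset.dvd_sum fun j hj => ?_)
        exact (((hαe i j (Finset.mem_erase.1 hj).1).mul_left (c j)).mul_right (β i))
      have h1 : (n * β i + r i) ≡ 0 [MOD α i] := Nat.modEq_zero_iff_dvd.2 (hrdvd i)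
      have h2 : (n * β i + c i) ≡ 0 [MOD α i] := Nat.modEq_zero_iff_dvd.2 hdc
      have h3 : r i ≡ c i [MOD α i] := Nat.ModEq.add_left_cancel' (n * β i) (h1.trans h2.symm)
      have h4 : r i % α i = c i % α i := h3
      rw [← Nat.mod_eq_of_lt (hrlt i), h4]
    refine ⟨fun i => c i / α i, ?_⟩
    have hceq : ∀ i, (c i : ℤ) = (α i : ℤ) * ((c i / α i : ℕ) : ℤ) + (r i : ℤ) := by
      intro i
      have hnat : c i = α i * (c i / α i) + r i := by
        rw [hri i]; exact (Nat.div_add_mod _ _).symm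
      exact_mod_cast congrArg (fun t : ℕ => (t : ℤ)) hnat
    apply mul_left_cancel₀ hL2
    rw [masterZ]
    have hnZ : (n : ℤ) = ∑ i, (c i : ℤ) * (e i : ℤ) := by
      exact_mod_cast congrArg (fun t : ℕ => (t : ℤ)) hc
    have hsum : (n : ℤ) - ∑ i, (r i : ℤ) * (e i : ℤ)
        = ∑ i, ((α i : ℤ) * ((c i / α i : ℕ) : ℤ)) * (e i : ℤ) := by
      rw [hnZ, ← Finset.sum_sub_distrib]
      refine Finset.sum_congr rfl fun i _ => ?_
      rw [hceq i]; ring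
    rw [hsum, Finset.mul_sum, Finset.mul_sum]
    refine Finset.sum_congr rfl fun i _ => ?_
    linear_combination (-((c i / α i : ℕ) : ℤ)) * hgiℓZ i
  · rintro ⟨c', hc'⟩
    refine ⟨fun i => r i + c' i * α i, ?_⟩
    have hZ : (n : ℤ) = ∑ i, ((r i : ℤ) + (c' i : ℤ) * (α i : ℤ)) * (e i : ℤ) := by
      have h1 : (∏ i, (a i : ℤ)) * ((n : ℤ) - ∑ i, (r i : ℤ) * (e i : ℤ))
          = (∏ i, (a i : ℤ)) * (∑ i, (c' i : ℤ) * ((α i : ℤ) * (e i : ℤ))) := by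
        rw [← masterZ, hc', Finset.mul_sum, Finset.mul_sum]
        exact Finset.sum_congr rfl fun i _ => by
          linear_combination (c' i : ℤ) * hgiℓZ i
      have h2 := mul_left_cancel₀ hpZ h1
      have h3 : ∑ i, ((r i : ℤ) + (c' i : ℤ) * (α i : ℤ)) * (e i : ℤ)
          = (∑ i, (r i : ℤ) * (e i : ℤ)) + ∑ i, (c' i : ℤ) * ((α i : ℤ) * (e i : ℤ)) := by
        rw [← Finset.sum_add_distrib]
        exact Finset.sum_congr rfl fun i _ => by ring
      rw [h3]
      omega
    exact_mod_cast hZ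
end

section
/- If (m−2)·ĝ − Σ_{i=1}^m ĝ_i ≥ 0 (equivalently, the genus g of the central curve is positive), then (m−2)·ℓ − Σ_{i=1}^m e_i belongs to the numerical semigroup ⟨e_1,…,e_m⟩, and (m−2)·ĝ − Σ_{i=1}^m ĝ_i belongs to the numerical semigroup ⟨ĝ_1,…,ĝ_m⟩. (Here (m−2)ℓ − Σe_i is the a-invariant a(R) of the homogeneous coordinate ring and (m−2)ĝ − Σĝ_i = 2g−2.) -/
/-!
With `β i = gcd (a i) ℓᵢ` one has `α i * β i = a i`, hence `α i * e i * β i = ℓ` and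
`ĝᵢ * β i = ĝ`; so both claims follow from positive integers `d i` with `∑ d i / β i = m - 2`,
via `c i = d i * α i - 1` and `c' i = d i - 1`. The hypothesis becomes `∑ (1 - 1 / β i) ≥ 2`, and
every prime power dividing some `β i` divides a second `β j` (it divides some `a j` with `j ≠ i`).

The `d i` are built around pairs. For `G = gcd (β i) (β j)` and `L = lcm (β i) (β j)`, the numbers
`L / β i` and `L / β j` are coprime with product `L / G`, so every `N > L / G` is a positive
combination of them: `N / L = u / β i + v / β j`. If `G ≥ 3` and some other `β k` shares a factor
with `L`, put `d k = β k / gcd (β k) L` on the other indices; the remainder `N / L` is at least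
`1 / 2 > 1 / G`. If every other `β k` is coprime to `L`, a prime factor of one of them gives a
disjoint second pair with `G ≥ 2`, and two pairs of value `1` with `d k = β k` elsewhere suffice.
If no pair has `G ≥ 3`, every `β k` divides `2` and the bound `∑ (1 - 1 / β k) ≥ 2` makes the
first construction work with `G = 2`.
-/

open Finset

variable {ι : Type*}

theorem exists_pos_mul_add_mul_eq {x y N : ℕ} (hy : 0 < y) (hxy : x.Coprime y) (hN : x * y < N) :
    ∃ u v, 0 < u ∧ 0 < v ∧ u * x + v * y = N := by
  have : NeZero y := ⟨hy.ne'⟩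
  have hxN : x ≤ N := (Nat.le_mul_of_pos_right x hy).trans hN.le
  -- `u ∈ [1, y]` is the residue with `u * x ≡ N [MOD y]`
  set u := ((N - x : ℕ) * (x : ZMod y)⁻¹).val + 1
  have huy : u ≤ y := ZMod.val_lt _
  have hux : u * x < N := lt_of_le_of_lt (Nat.mul_le_mul_right x huy) (by rwa [mul_comm])
  have hmod : ((N - u * x : ℕ) : ZMod y) = 0 := by
    rw [Nat.cast_sub hux.le, Nat.cast_mul, Nat.cast_add, ZMod.natCast_val, ZMod.cast_id,
      Nat.cast_sub hxN, Nat.cast_one]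
    linear_combination (-(N : ZMod y) + x) * ZMod.coe_mul_inv_eq_one x hxy
  obtain ⟨v, hv⟩ := (ZMod.natCast_eq_zero_iff _ _).mp hmod
  refine ⟨u, v, Nat.succ_pos _, Nat.pos_of_ne_zero ?_, ?_⟩
  · rintro rfl
    omega
  · rw [mul_comm v, ← hv]
    omega

def IsPosFracSum (s : Finset ι) (β : ι → ℕ) (q : ℚ) : Prop :=
  ∃ d : ι → ℕ, (∀ k ∈ s, 0 < d k) ∧ ∑ k ∈ s, (d k : ℚ) / β k = q

theorem IsPosFracSum.union [DecidableEq ι] {s t : Finset ι} {β : ι → ℕ} {q r : ℚ}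
    (hs : IsPosFracSum s β q) (ht : IsPosFracSum t β r) (hst : Disjoint s t) :
    IsPosFracSum (s ∪ t) β (q + r) := by
  obtain ⟨d, hd, rfl⟩ := hs
  obtain ⟨d', hd', rfl⟩ := ht
  refine ⟨s.piecewise d d', fun k hk => ?_, ?_⟩
  · by_cases hks : k ∈ s
    · simpa [hks] using hd k hks
    · simpa [hks] using hd' k ((mem_union.mp hk).resolve_left hks)
  · rw [sum_union hst]
    congr 1
    · exact sum_congr rfl fun k hk => by rw [piecewise_eq_of_mem _ _ _ hk]
    · exact sum_congr rfl fun k hk => by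
        rw [piecewise_eq_of_notMem _ _ _ (disjoint_right.mp hst hk)]

theorem isPosFracSum_sum {s : Finset ι} {β : ι → ℕ} (q : ι → ℚ)
    (h : ∀ k ∈ s, ∃ n : ℕ, 0 < n ∧ q k = n / β k) : IsPosFracSum s β (∑ k ∈ s, q k) := by
  choose! d hd hq using h
  exact ⟨d, hd, sum_congr rfl fun k hk => (hq k hk).symm⟩

theorem isPosFracSum_card {s : Finset ι} {β : ι → ℕ} (hβ : ∀ k ∈ s, 0 < β k) :
    IsPosFracSum s β s.card := by
  simpa using isPosFracSum_sum (s := s) (β := β) (fun _ => 1) fun k hk =>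
    ⟨β k, hβ k hk, by rw [div_self (by exact_mod_cast (hβ k hk).ne')]⟩

theorem isPosFracSum_pair [DecidableEq ι] {β : ι → ℕ} {i j : ι} (hij : i ≠ j)
    (hi : 0 < β i) (hj : 0 < β j) {N : ℕ} (hN : Nat.lcm (β i) (β j) < N * Nat.gcd (β i) (β j)) :
    IsPosFracSum {i, j} β (N / Nat.lcm (β i) (β j)) := by
  obtain ⟨x, y, hxy, hx, hy⟩ := Nat.exists_coprime (β i) (β j)
  set G := Nat.gcd (β i) (β j)
  have hG : 0 < G := Nat.gcd_pos_of_pos_left _ hi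
  have hL : Nat.lcm (β i) (β j) = x * y * G := by
    apply Nat.eq_of_mul_eq_mul_left hG
    rw [Nat.gcd_mul_lcm, hx, hy]
    ring
  have hyxN : y * x * G < N * G := by rw [mul_comm y, ← hL]; exact hN
  have hx0 : 0 < x := Nat.pos_of_ne_zero fun h => by simp [h] at hx; omega
  have hy0 : 0 < y := Nat.pos_of_ne_zero fun h => by simp [h] at hy; omega
  obtain ⟨u, v, hu, hv, huv⟩ :=
    exists_pos_mul_add_mul_eq hx0 hxy.symm (Nat.lt_of_mul_lt_mul_right hyxN)
  refine ⟨fun k => if k = i then u else v, ?_, ?_⟩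
  · intro k _
    dsimp only
    split_ifs <;> assumption
  · dsimp only
    rw [sum_pair hij, if_pos rfl, if_neg hij.symm, hL, hx, hy, ← huv]
    have hxQ : (x : ℚ) ≠ 0 := by positivity
    have hyQ : (y : ℚ) ≠ 0 := by positivity
    have hGQ : (G : ℚ) ≠ 0 := by positivity
    push_cast
    field_simp

theorem isPosFracSum_pair_one [DecidableEq ι] {β : ι → ℕ} {i j : ι} (hij : i ≠ j)
    (hi : 0 < β i) (hj : 0 < β j) (hG : 2 ≤ Nat.gcd (β i) (β j)) : IsPosFracSum {i, j} β 1 := by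
  have hL : 0 < Nat.lcm (β i) (β j) := Nat.lcm_pos hi hj
  have h := isPosFracSum_pair hij hi hj (lt_mul_of_one_lt_right hL hG)
  rwa [div_self (Nat.cast_ne_zero.mpr hL.ne')] at h

theorem isPosFracSum_card_sub_two_of_pair [DecidableEq ι] {s : Finset ι} {β : ι → ℕ}
    (hβ : ∀ k ∈ s, 0 < β k) {i j : ι} (hi : i ∈ s) (hj : j ∈ s) (hij : i ≠ j)
    (h : 1 / (Nat.gcd (β i) (β j) : ℚ) <
      ∑ k ∈ s \ {i, j}, (1 - 1 / (Nat.gcd (β k) (Nat.lcm (β i) (β j)) : ℚ))) :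
    IsPosFracSum s β (s.card - 2) := by
  set L := Nat.lcm (β i) (β j)
  have hL : 0 < L := Nat.lcm_pos (hβ i hi) (hβ j hj)
  have ht : ∀ k ∈ s, 0 < Nat.gcd (β k) L := fun k hk => Nat.gcd_pos_of_pos_left _ (hβ k hk)
  have hij_sub : {i, j} ⊆ s := insert_subset hi (singleton_subset_iff.mpr hj)
  set N := ∑ k ∈ s \ {i, j}, (L - L / Nat.gcd (β k) L)
  have hN : (N : ℚ) / L = ∑ k ∈ s \ {i, j}, (1 - 1 / (Nat.gcd (β k) L : ℚ)) := by
    rw [Nat.cast_sum, sum_div]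
    refine sum_congr rfl fun k hk => ?_
    have htk : (Nat.gcd (β k) L : ℚ) ≠ 0 := by exact_mod_cast (ht k (mem_sdiff.mp hk).1).ne'
    rw [Nat.cast_sub (Nat.div_le_self _ _), Nat.cast_div (Nat.gcd_dvd_right _ _) htk]
    field_simp
  have hNG : L < N * Nat.gcd (β i) (β j) := by
    have hG : (0 : ℚ) < Nat.gcd (β i) (β j) := by exact_mod_cast Nat.gcd_pos_of_pos_left _ (hβ i hi)
    rw [← hN, div_lt_div_iff₀ hG (by exact_mod_cast hL)] at h
    exact_mod_cast (by linarith : (L : ℚ) < N * Nat.gcd (β i) (β j))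
  have hrest : IsPosFracSum (s \ {i, j}) β (∑ k ∈ s \ {i, j}, 1 / (Nat.gcd (β k) L : ℚ)) :=
    isPosFracSum_sum _ fun k hk => by
      have hks := (mem_sdiff.mp hk).1
      refine ⟨β k / Nat.gcd (β k) L, Nat.div_pos (Nat.gcd_le_left _ (hβ k hks)) (ht k hks), ?_⟩
      have htk : (Nat.gcd (β k) L : ℚ) ≠ 0 := by exact_mod_cast (ht k hks).ne'
      have hβk : (β k : ℚ) ≠ 0 := by exact_mod_cast (hβ k hks).ne'
      rw [Nat.cast_div (Nat.gcd_dvd_left _ _) htk]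
      field_simp
  have h := hrest.union (isPosFracSum_pair hij (hβ i hi) (hβ j hj) hNG) sdiff_disjoint
  rw [sdiff_union_of_subset hij_sub, hN, ← sum_add_distrib] at h
  convert h using 1
  have hcard := card_sdiff_add_card_eq_card hij_sub
  rw [card_pair hij] at hcard
  simp only [add_sub_cancel, sum_const, nsmul_eq_mul, mul_one]
  rw [← hcard]
  push_cast
  ring

theorem isPosFracSum_card_sub_two_of_two_pairs [DecidableEq ι] {s : Finset ι} {β : ι → ℕ}
    (hβ : ∀ k ∈ s, 0 < β k) {i j k l : ι} (hi : i ∈ s) (hj : j ∈ s) (hk : k ∈ s) (hl : l ∈ s)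
    (hij : i ≠ j) (hkl : k ≠ l) (hdisj : Disjoint ({i, j} : Finset ι) {k, l})
    (hij_gcd : 2 ≤ Nat.gcd (β i) (β j)) (hkl_gcd : 2 ≤ Nat.gcd (β k) (β l)) :
    IsPosFracSum s β (s.card - 2) := by
  have hP : IsPosFracSum ({i, j} ∪ {k, l}) β (1 + 1) :=
    (isPosFracSum_pair_one hij (hβ i hi) (hβ j hj) hij_gcd).union
      (isPosFracSum_pair_one hkl (hβ k hk) (hβ l hl) hkl_gcd) hdisj
  have hPs : {i, j} ∪ {k, l} ⊆ s := by
    simp only [union_subset_iff, insert_subset_iff, singleton_subset_iff]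
    exact ⟨⟨hi, hj⟩, hk, hl⟩
  have h := (isPosFracSum_card fun x hx => hβ x (mem_sdiff.mp hx).1).union hP sdiff_disjoint
  rw [sdiff_union_of_subset hPs] at h
  convert h using 1
  have hcard := card_sdiff_add_card_eq_card hPs
  rw [card_union_of_disjoint hdisj, card_pair hij, card_pair hkl] at hcard
  rw [← hcard]
  push_cast
  ring

def PrimePowDvdOther (s : Finset ι) (β : ι → ℕ) : Prop :=
  ∀ k ∈ s, ∀ q, IsPrimePow q → q ∣ β k → ∃ j ∈ s, j ≠ k ∧ q ∣ β j

theorem PrimePowDvdOther.dvd_two {s : Finset ι} {β : ι → ℕ} (h : PrimePowDvdOther s β)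
    (hβ : ∀ k ∈ s, 0 < β k) (hgcd : ∀ i ∈ s, ∀ j ∈ s, i ≠ j → Nat.gcd (β i) (β j) < 3)
    {k : ι} (hk : k ∈ s) : β k ∣ 2 := by
  refine (Nat.dvd_iff_prime_pow_dvd_dvd 2 (β k)).mpr fun p e hp hpe => ?_
  rcases Nat.eq_zero_or_pos e with rfl | he
  · simp
  obtain ⟨j, hj, hjk, hpej⟩ := h k hk (p ^ e) ((isPrimePow_nat_iff _).mpr ⟨p, e, hp, he, rfl⟩) hpe
  have hle : p ^ e ≤ Nat.gcd (β k) (β j) :=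
    Nat.le_of_dvd (Nat.gcd_pos_of_pos_left _ (hβ k hk)) (Nat.dvd_gcd hpe hpej)
  have h2 : 2 ≤ p ^ e := hp.two_le.trans (Nat.le_self_pow he.ne' p)
  have := hgcd k hk j hj hjk.symm
  rw [show p ^ e = 2 by omega]

theorem sum_sdiff_pair_add {M : Type*} [AddCommMonoid M] [DecidableEq ι] {s : Finset ι}
    (f : ι → M) {i j : ι} (hi : i ∈ s) (hj : j ∈ s) (hij : i ≠ j) :
    ∑ k ∈ s \ {i, j}, f k + (f i + f j) = ∑ k ∈ s, f k := by
  rw [← sum_pair hij]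
  exact sum_sdiff (insert_subset hi (singleton_subset_iff.mpr hj))

theorem one_sub_one_div_nonneg {n : ℕ} (hn : 0 < n) : 0 ≤ 1 - 1 / (n : ℚ) := by
  rw [sub_nonneg]
  exact div_le_one_of_le₀ (by exact_mod_cast hn) (by positivity)

theorem isPosFracSum_card_sub_two_of_three_le_gcd [DecidableEq ι] {s : Finset ι} {β : ι → ℕ}
    (hβ : ∀ k ∈ s, 0 < β k) (hβs : PrimePowDvdOther s β)
    (hcap : 2 ≤ ∑ k ∈ s, (1 - 1 / (β k : ℚ))) {i j : ι} (hi : i ∈ s) (hj : j ∈ s) (hij : i ≠ j)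
    (hG : 3 ≤ Nat.gcd (β i) (β j)) : IsPosFracSum s β (s.card - 2) := by
  set L := Nat.lcm (β i) (β j)
  by_cases hX : ∃ k ∈ s \ {i, j}, 2 ≤ Nat.gcd (β k) L
  · obtain ⟨k, hk, hk2⟩ := hX
    refine isPosFracSum_card_sub_two_of_pair hβ hi hj hij ?_
    calc 1 / (Nat.gcd (β i) (β j) : ℚ) ≤ 1 / 3 := by gcongr; exact_mod_cast hG
      _ < 1 - 1 / 2 := by norm_num
      _ ≤ 1 - 1 / (Nat.gcd (β k) L : ℚ) := by gcongr; exact_mod_cast hk2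
      _ ≤ _ := single_le_sum (f := fun x => 1 - 1 / (Nat.gcd (β x) L : ℚ)) (fun x hx =>
          one_sub_one_div_nonneg (Nat.gcd_pos_of_pos_left _ (hβ x (mem_sdiff.mp hx).1))) hk
  push Not at hX
  obtain ⟨w, hw, hw2⟩ : ∃ w ∈ s \ {i, j}, 2 ≤ β w := by
    by_contra! hw
    have h0 : ∑ k ∈ s \ {i, j}, (1 - 1 / (β k : ℚ)) = 0 := sum_eq_zero fun k hk => by
      rw [show β k = 1 by have := hβ k (mem_sdiff.mp hk).1; have := hw k hk; omega]
      norm_num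
    have hi1 : 0 < 1 / (β i : ℚ) := by have := hβ i hi; positivity
    have hj1 : 0 < 1 / (β j : ℚ) := by have := hβ j hj; positivity
    linarith [sum_sdiff_pair_add (fun k => 1 - 1 / (β k : ℚ)) hi hj hij]
  have hws := (mem_sdiff.mp hw).1
  obtain ⟨p, hp, hpw⟩ := Nat.exists_prime_and_dvd (show β w ≠ 1 by omega)
  obtain ⟨k, hk, hkw, hpk⟩ := hβs w hws p hp.isPrimePow hpw
  have hk' : k ∉ ({i, j} : Finset ι) := by
    intro hkij
    have hpL : p ∣ L := by
      simp only [mem_insert, mem_singleton] at hkij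
      rcases hkij with rfl | rfl
      exacts [hpk.trans (Nat.dvd_lcm_left _ _), hpk.trans (Nat.dvd_lcm_right _ _)]
    have := Nat.le_of_dvd (Nat.gcd_pos_of_pos_left _ (hβ w hws)) (Nat.dvd_gcd hpw hpL)
    have := hX w hw
    have := hp.two_le
    omega
  refine isPosFracSum_card_sub_two_of_two_pairs hβ hi hj hws hk hij hkw.symm ?_ (by omega)
    (hp.two_le.trans (Nat.le_of_dvd (Nat.gcd_pos_of_pos_left _ (hβ w hws)) (Nat.dvd_gcd hpw hpk)))
  simp only [disjoint_insert_right, disjoint_singleton_right]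
  exact ⟨(mem_sdiff.mp hw).2, hk'⟩

theorem isPosFracSum_card_sub_two_of_dvd_two [DecidableEq ι] {s : Finset ι} {β : ι → ℕ}
    (hβ : ∀ k ∈ s, 0 < β k) (hβ2 : ∀ k ∈ s, β k ∣ 2)
    (hcap : 2 ≤ ∑ k ∈ s, (1 - 1 / (β k : ℚ))) : IsPosFracSum s β (s.card - 2) := by
  have hT : 1 < (s.filter (β · = 2)).card := by
    have : ∑ k ∈ s, (1 - 1 / (β k : ℚ)) ≤ ∑ k ∈ s, if β k = 2 then 1 else 0 :=
      sum_le_sum fun k hk => by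
        rcases (Nat.dvd_prime Nat.prime_two).mp (hβ2 k hk) with h | h <;> norm_num [h]
    rw [sum_boole] at this
    exact_mod_cast (by linarith : (1 : ℚ) < (s.filter (β · = 2)).card)
  obtain ⟨i, hi, j, hj, hij⟩ := one_lt_card.mp hT
  rw [mem_filter] at hi hj
  refine isPosFracSum_card_sub_two_of_pair hβ hi.1 hj.1 hij ?_
  have hs' : ∀ k ∈ s \ {i, j}, Nat.gcd (β k) (Nat.lcm (β i) (β j)) = β k := fun k hk => by
    rw [hi.2, hj.2, Nat.lcm_self]
    exact Nat.gcd_eq_left (hβ2 k (mem_sdiff.mp hk).1)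
  rw [sum_congr rfl fun k hk => by rw [hs' k hk], hi.2, hj.2, Nat.gcd_self]
  have := sum_sdiff_pair_add (fun k => 1 - 1 / (β k : ℚ)) hi.1 hj.1 hij
  rw [hi.2, hj.2] at this
  push_cast at this ⊢
  linarith

theorem isPosFracSum_card_sub_two [DecidableEq ι] {s : Finset ι} {β : ι → ℕ}
    (hβ : ∀ k ∈ s, 0 < β k) (hβs : PrimePowDvdOther s β)
    (hcap : 2 ≤ ∑ k ∈ s, (1 - 1 / (β k : ℚ))) : IsPosFracSum s β (s.card - 2) := by
  by_cases hG : ∃ i ∈ s, ∃ j ∈ s, i ≠ j ∧ 3 ≤ Nat.gcd (β i) (β j)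
  · obtain ⟨i, hi, j, hj, hij, hG⟩ := hG
    exact isPosFracSum_card_sub_two_of_three_le_gcd hβ hβs hcap hi hj hij hG
  · push Not at hG
    exact isPosFracSum_card_sub_two_of_dvd_two hβ (fun k hk => hβs.dvd_two hβ hG hk) hcap

theorem IsPrimePow.exists_dvd_of_dvd_lcm {q : ℕ} (hq : IsPrimePow q) {s : Finset ι}
    {f : ι → ℕ} (hf : ∀ i ∈ s, f i ≠ 0) (h : q ∣ s.lcm f) : ∃ i ∈ s, q ∣ f i := by
  obtain ⟨p, e, hp, he, rfl⟩ := (isPrimePow_nat_iff q).mp hq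
  rw [hp.pow_dvd_iff_le_factorization (lcm_ne_zero_iff.mpr hf), factorization_lcm hf,
    Finset.le_sup_iff he] at h
  obtain ⟨i, hi, hei⟩ := h
  exact ⟨i, hi, (hp.pow_dvd_iff_le_factorization (hf i hi)).mpr hei⟩

theorem primePowDvdOther_gcd_lcm_erase [DecidableEq ι] {s : Finset ι} {a : ι → ℕ}
    (ha : ∀ i ∈ s, a i ≠ 0) : PrimePowDvdOther s fun i => Nat.gcd (a i) ((s.erase i).lcm a) := by
  intro k hk q hq hqk
  obtain ⟨j, hj, hqj⟩ := hq.exists_dvd_of_dvd_lcm (fun i hi => ha i (mem_of_mem_erase hi))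
    (hqk.trans (Nat.gcd_dvd_right _ _))
  have hjk := ne_of_mem_erase hj
  refine ⟨j, mem_of_mem_erase hj, hjk, Nat.dvd_gcd hqj ?_⟩
  exact (hqk.trans (Nat.gcd_dvd_left _ _)).trans (dvd_lcm (mem_erase.mpr ⟨hjk.symm, hk⟩))

section LcmErase

variable [Fintype ι] {a : ι → ℕ}

theorem prod_div_lcm_pos (ha : ∀ i, a i ≠ 0) : 0 < (∏ i, a i) / univ.lcm a :=
  Nat.div_pos (Nat.le_of_dvd (Nat.pos_of_ne_zero (prod_ne_zero_iff.mpr fun i _ => ha i))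
    (lcm_dvd_prod _ _)) (Nat.pos_of_ne_zero (lcm_ne_zero_iff.mpr fun i _ => ha i))

variable [DecidableEq ι]

theorem gcd_lcm_erase_mul_lcm (i : ι) :
    Nat.gcd (a i) ((univ.erase i).lcm a) * univ.lcm a = a i * (univ.erase i).lcm a := by
  have h := lcm_insert (s := univ.erase i) (f := a) (b := i)
  rw [insert_erase (mem_univ i)] at h
  rw [h]
  exact Nat.gcd_mul_lcm _ _

theorem lcm_div_lcm_erase_mul_gcd (ha : ∀ i, a i ≠ 0) (i : ι) :
    univ.lcm a / (univ.erase i).lcm a * Nat.gcd (a i) ((univ.erase i).lcm a) = a i := by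
  apply Nat.eq_of_mul_eq_mul_right (Nat.pos_of_ne_zero (lcm_ne_zero_iff.mpr fun j _ => ha j))
  rw [mul_right_comm, Nat.div_mul_cancel (lcm_mono (erase_subset i univ)), mul_comm,
    gcd_lcm_erase_mul_lcm]

theorem lcm_div_lcm_erase_mul_lcm_div_mul_gcd (ha : ∀ i, a i ≠ 0) (i : ι) :
    univ.lcm a / (univ.erase i).lcm a * (univ.lcm a / a i) * Nat.gcd (a i) ((univ.erase i).lcm a) =
      univ.lcm a := by
  rw [mul_right_comm, lcm_div_lcm_erase_mul_gcd ha, Nat.mul_div_cancel' (dvd_lcm (mem_univ i))]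

theorem prod_div_lcm_mul_lcm_div_lcm_erase_div_mul_gcd (ha : ∀ i, a i ≠ 0) (i : ι) :
    (∏ j, a j) / univ.lcm a * (univ.lcm a / (univ.erase i).lcm a) / a i *
        Nat.gcd (a i) ((univ.erase i).lcm a) = (∏ j, a j) / univ.lcm a := by
  set β := Nat.gcd (a i) ((univ.erase i).lcm a)
  set Q := (∏ j ∈ univ.erase i, a j) / (univ.erase i).lcm a
  have hQ : β * Q = (∏ j, a j) / univ.lcm a := by
    refine (Nat.div_eq_of_eq_mul_left (Nat.pos_of_ne_zero (lcm_ne_zero_iff.mpr fun j _ => ha j))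
      ?_).symm
    rw [mul_right_comm, gcd_lcm_erase_mul_lcm, mul_assoc, Nat.mul_div_cancel' (lcm_dvd_prod _ _),
      mul_prod_erase _ _ (mem_univ i)]
  rw [← hQ, mul_right_comm, mul_comm β, lcm_div_lcm_erase_mul_gcd ha,
    Nat.mul_div_cancel_left _ (Nat.pos_of_ne_zero (ha i)), mul_comm]

end LcmErase

section Fintype

variable [Fintype ι] {β w : ι → ℕ} {W : ℕ}

theorem two_le_sum_one_sub_inv (hW : 0 < W) (hw : ∀ i, w i * β i = W)
    (h : (0 : ℤ) ≤ ((Fintype.card ι : ℤ) - 2) * W - ∑ i, (w i : ℤ)) :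
    2 ≤ ∑ i, (1 - 1 / (β i : ℚ)) := by
  have hW' : (0 : ℚ) < W := by exact_mod_cast hW
  have hinv : ∀ i, 1 / (β i : ℚ) = w i / W := fun i => by
    have hβ : (β i : ℚ) ≠ 0 :=
      Nat.cast_ne_zero.mpr (right_ne_zero_of_mul (by rw [hw i]; exact hW.ne'))
    rw [div_eq_div_iff hβ hW'.ne', one_mul]
    exact_mod_cast (hw i).symm
  have hle : (∑ i, (w i : ℚ)) / W ≤ Fintype.card ι - 2 := by
    rw [div_le_iff₀ hW']
    exact_mod_cast (by linarith : ∑ i, (w i : ℤ) ≤ ((Fintype.card ι : ℤ) - 2) * W)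
  rw [sum_sub_distrib, sum_congr rfl fun i _ => hinv i, ← sum_div, sum_const, card_univ,
    nsmul_eq_mul, mul_one]
  linarith

theorem exists_sub_sum_eq_sum_mul {d n : ι → ℕ} {M : ℤ} (hβ : ∀ i, β i ≠ 0) (hn : ∀ i, 0 < n i)
    (hnw : ∀ i, n i * w i * β i = d i * W) (hd : ∑ i, (d i : ℚ) / β i = M) :
    ∃ c : ι → ℕ, M * W - ∑ i, (w i : ℤ) = ∑ i, (c i : ℤ) * w i := by
  refine ⟨fun i => n i - 1, ?_⟩
  have hsum : ∑ i, (n i : ℤ) * w i = M * W := by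
    have : ∑ i, (n i : ℚ) * w i = M * W := by
      rw [← hd, sum_mul]
      refine sum_congr rfl fun i _ => ?_
      have : (β i : ℚ) ≠ 0 := by exact_mod_cast hβ i
      rw [div_mul_eq_mul_div, eq_div_iff this]
      exact_mod_cast hnw i
    exact_mod_cast this
  rw [← hsum, ← sum_sub_distrib]
  refine sum_congr rfl fun i _ => ?_
  push_cast [Nat.cast_sub (hn i)]
  ring

end Fintype

theorem brieskorn_a_invariant_in_semigroup_general
    (m : ℕ) (a : Fin m → ℕ)
    (ha : ∀ i, 2 ≤ a i)
    (ℓ : ℕ) (hℓ : ℓ = Finset.univ.lcm a)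
    (ℓi : Fin m → ℕ) (hℓi : ∀ i, ℓi i = (Finset.univ.erase i).lcm a)
    (α : Fin m → ℕ) (hα : ∀ i, α i = ℓ / ℓi i)
    (e : Fin m → ℕ) (he : ∀ i, e i = ℓ / a i)
    (g : ℕ) (hg : g = (∏ i, a i) / ℓ)
    (gi : Fin m → ℕ) (hgi : ∀ i, gi i = g * α i / a i)
    (hpos : (0 : ℤ) ≤ ((m : ℤ) - 2) * (g : ℤ) - ∑ i, (gi i : ℤ)) :
    (∃ c : Fin m → ℕ,
      ((m : ℤ) - 2) * (ℓ : ℤ) - ∑ i, (e i : ℤ) = ∑ i, (c i : ℤ) * (e i : ℤ)) ∧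
    (∃ c' : Fin m → ℕ,
      ((m : ℤ) - 2) * (g : ℤ) - ∑ i, (gi i : ℤ) = ∑ i, (c' i : ℤ) * (gi i : ℤ)) := by
  have ha0 : ∀ i, a i ≠ 0 := fun i => by have := ha i; omega
  subst hℓ hg
  set β : Fin m → ℕ := fun i => Nat.gcd (a i) ((univ.erase i).lcm a)
  have hαβ : ∀ i, α i * β i = a i := fun i => by
    rw [hα, hℓi]
    exact lcm_div_lcm_erase_mul_gcd ha0 i
  have hβ : ∀ i, β i ≠ 0 := fun i => right_ne_zero_of_mul (hαβ i ▸ ha0 i)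
  have hαeβ : ∀ i, α i * e i * β i = univ.lcm a := fun i => by
    rw [hα, he, hℓi]
    exact lcm_div_lcm_erase_mul_lcm_div_mul_gcd ha0 i
  have hgiβ : ∀ i, gi i * β i = (∏ i, a i) / univ.lcm a := fun i => by
    rw [hgi, hα, hℓi]
    exact prod_div_lcm_mul_lcm_div_lcm_erase_div_mul_gcd ha0 i
  obtain ⟨d, hd, hdsum⟩ := isPosFracSum_card_sub_two (fun i _ => Nat.pos_of_ne_zero (hβ i))
    (primePowDvdOther_gcd_lcm_erase fun i _ => ha0 i)
    (two_le_sum_one_sub_inv (prod_div_lcm_pos ha0) hgiβ (by simpa using hpos))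
  have hdsum' : ∑ i, (d i : ℚ) / β i = ((m : ℤ) - 2 : ℤ) := by simpa using hdsum
  have hα0 : ∀ i, 0 < α i := fun i => Nat.pos_of_ne_zero (left_ne_zero_of_mul (hαβ i ▸ ha0 i))
  exact ⟨exists_sub_sum_eq_sum_mul hβ (fun i => Nat.mul_pos (hd i (mem_univ i)) (hα0 i))
      (fun i => by rw [← hαeβ i]; ring) hdsum',
    exists_sub_sum_eq_sum_mul hβ (fun i => hd i (mem_univ i)) (fun i => by rw [mul_assoc, hgiβ])
      hdsum'⟩

/-- If `(m−2)·ĝ − Σ ĝ i ≥ 0` (i.e. the genus of the central curve is positive),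
then the a-invariant `(m−2)·ℓ − Σ e i` lies in the numerical semigroup
`⟨e 1, …, e m⟩`, and `(m−2)·ĝ − Σ ĝ i = 2g−2` lies in `⟨ĝ 1, …, ĝ m⟩`. -/
theorem brieskorn_a_invariant_in_semigroup
    (m : ℕ) (hm : 3 ≤ m) (a : Fin m → ℕ)
    (ha : ∀ i, 2 ≤ a i) (hmono : Monotone a)
    (ℓ : ℕ) (hℓ : ℓ = Finset.univ.lcm a)
    (ℓi : Fin m → ℕ) (hℓi : ∀ i, ℓi i = (Finset.univ.erase i).lcm a)
    (α : Fin m → ℕ) (hα : ∀ i, α i = ℓ / ℓi i)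
    (e : Fin m → ℕ) (he : ∀ i, e i = ℓ / a i)
    (g : ℕ) (hg : g = (∏ i, a i) / ℓ)
    (gi : Fin m → ℕ) (hgi : ∀ i, gi i = g * α i / a i)
    (hpos : (0 : ℤ) ≤ ((m : ℤ) - 2) * (g : ℤ) - ∑ i, (gi i : ℤ)) :
    (∃ c : Fin m → ℕ,
      ((m : ℤ) - 2) * (ℓ : ℤ) - ∑ i, (e i : ℤ) = ∑ i, (c i : ℤ) * (e i : ℤ)) ∧
    (∃ c' : Fin m → ℕ,
      ((m : ℤ) - 2) * (g : ℤ) - ∑ i, (gi i : ℤ) = ∑ i, (c' i : ℤ) * (gi i : ℤ)) :=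
  brieskorn_a_invariant_in_semigroup_general m a ha ℓ hℓ ℓi hℓi α hα e he g hg gi hgi hpos
end

section
/- For every integer n ≥ 0, if deg D_n > 0 then deg D_α divides deg D_n; that is, there exists a (necessarily positive) integer k with deg D_n = k·deg D_α. -/
/-!
Multiplying by `ℓ` clears all denominators: with `t_i = ⌈n β_i / α_i⌉` one gets
`ℓ · deg D_n = ĝ · R_n` for the integer `R_n = n (1 + ∑ e_i β_i) - ∑ e_i α_i t_i`.
Modulo `α_i` every `e_j` with `j ≠ i` vanishes and `1 + e_i β_i ≡ 0`, so `α_i ∣ R_n`; the same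
congruences make the `α_i` pairwise coprime, hence `α = ∏ α_i` divides `R_n`. For `n = α` all the
ceilings are exact and `R_α = α`, so `deg D_n = (R_n / α) · deg D_α`.
-/

open Finset

section ScaledDegree

variable {ι R : Type*} [Fintype ι] [CommRing R]

/-- With `t i = ⌈N β_i / α_i⌉` this is `ℓ · deg D_N / ĝ`. -/
def scaledDeg (e α β t : ι → R) (N : R) : R :=
  N * (1 + ∑ i, e i * β i) - ∑ i, e i * (α i * t i)

theorem scaledDeg_eq_self {e α β t : ι → R} {N : R} (h : ∀ i, α i * t i = N * β i) :
    scaledDeg e α β t N = N := by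
  simp only [scaledDeg, h, mul_add, mul_sum, mul_left_comm (e _)]
  ring

theorem dvd_scaledDeg [DecidableEq ι] {e α β : ι → R} {i : ι} (hcross : ∀ j, j ≠ i → α i ∣ e j)
    (hinv : α i ∣ e i * β i + 1) (t : ι → R) (N : R) : α i ∣ scaledDeg e α β t N := by
  have hβsum : α i ∣ 1 + ∑ j, e j * β j := by
    rw [← add_sum_erase _ _ (mem_univ i), ← add_assoc, add_comm 1]
    exact dvd_add hinv (dvd_sum fun j hj => (hcross j (ne_of_mem_erase hj)).mul_right _)
  have htsum : α i ∣ ∑ j, e j * (α j * t j) := dvd_sum fun j _ => by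
    rcases eq_or_ne j i with rfl | hj
    · exact (dvd_mul_right _ _).mul_left _
    · exact (hcross j hj).mul_right _
  exact dvd_sub (hβsum.mul_left N) htsum

theorem isCoprime_of_dvd_mul_add_one {a b c : R} (h : a ∣ b * c + 1) : IsCoprime a b := by
  obtain ⟨k, hk⟩ := h
  exact ⟨k, -c, by linear_combination -hk⟩

theorem prod_dvd_scaledDeg [DecidableEq ι] {e α β : ι → R}
    (hcross : ∀ i j, j ≠ i → α i ∣ e j) (hinv : ∀ i, α i ∣ e i * β i + 1) (t : ι → R) (N : R) :
    ∏ i, α i ∣ scaledDeg e α β t N :=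
  Fintype.prod_dvd_of_coprime
    (fun i j hij => (isCoprime_of_dvd_mul_add_one (hinv i)).of_isCoprime_of_dvd_right
      (hcross j i hij))
    fun i => dvd_scaledDeg (hcross i) (hinv i) t N

theorem mul_sub_sum_mul_eq_scaledDeg {K : Type*} [Field K] {a e gi α β t : ι → K} {ℓ g c₀ P : K}
    (hc₀ : c₀ = ∑ i, gi i * β i / α i + P / ℓ ^ 2) (hP : P = g * ℓ)
    (hgi : ∀ i, gi i * a i = g * α i) (he : ∀ i, e i * a i = ℓ) (hα : ∀ i, α i ≠ 0)
    (hℓ : ℓ ≠ 0) (N : K) :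
    (N * c₀ - ∑ i, gi i * t i) * ℓ = g * scaledDeg e α β t N := by
  have hβ : ∀ i, gi i * β i / α i * ℓ = g * (e i * β i) := fun i => by
    rw [← he i, div_mul_eq_mul_div, div_eq_iff (hα i)]
    linear_combination (e i * β i) * hgi i
  have ht : ∀ i, gi i * t i * ℓ = g * (e i * (α i * t i)) := fun i => by
    rw [← he i]
    linear_combination (e i * t i) * hgi i
  have hPℓ : P / ℓ ^ 2 * ℓ = g := by
    rw [hP]; field_simp
  have hsplit : (N * c₀ - ∑ i, gi i * t i) * ℓ
      = N * (∑ i, gi i * β i / α i * ℓ + P / ℓ ^ 2 * ℓ) - ∑ i, gi i * t i * ℓ := by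
    rw [hc₀, ← sum_mul, ← sum_mul]; ring
  rw [hsplit, scaledDeg]
  simp only [hβ, ht, hPℓ, ← mul_sum]
  ring

theorem Int.cast_scaledDeg (e α β t : ι → ℤ) (N : ℤ) :
    ((scaledDeg e α β t N : ℤ) : R)
      = scaledDeg (fun i => (e i : R)) (fun i => (α i : R)) (fun i => (β i : R))
          (fun i => (t i : R)) N := by
  simp [scaledDeg]

end ScaledDegree

section LcmQuotients

variable {ι : Type*} [DecidableEq ι] (a : ι → ℕ) {s : Finset ι} {i : ι}

theorem lcm_div_lcm_erase_dvd_lcm_div {j : ι} (hj : j ∈ s) (hji : j ≠ i) :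
    s.lcm a / (s.erase i).lcm a ∣ s.lcm a / a j :=
  Nat.div_dvd_div_left (lcm_mono (erase_subset i s)) (dvd_lcm (mem_erase.2 ⟨hji, hj⟩))

theorem dvd_prod_div_lcm_mul_lcm_div_lcm_erase (hi : i ∈ s) :
    a i ∣ (∏ j ∈ s, a j) / s.lcm a * (s.lcm a / (s.erase i).lcm a) := by
  rw [Nat.div_mul_div (lcm_dvd_prod s a) (lcm_mono (erase_subset i s)), ← mul_prod_erase s a hi,
    Nat.mul_div_assoc _ (lcm_dvd_prod _ _)]
  exact dvd_mul_right _ _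

end LcmQuotients

theorem mul_ceil_mul_div_of_dvd {K : Type*} [Field K] [LinearOrder K] [IsStrictOrderedRing K]
    [FloorRing K] {d N : ℕ} (b : ℕ) (h : d ∣ N) : (d : ℤ) * ⌈(N : K) * b / d⌉ = N * b := by
  obtain ⟨q, rfl⟩ := h
  rcases eq_or_ne d 0 with rfl | hd
  · simp
  have hexact : ((d * q : ℕ) : K) * b / d = ((q * b : ℕ) : ℤ) := by
    push_cast; field_simp
  rw [hexact, Int.ceil_intCast]
  push_cast; ring

section CeilDegree

variable {ι : Type*} [Fintype ι]

def ceilDeg (c₀ : ℤ) (gi α β : ι → ℕ) (N : ℕ) : ℤ :=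
  N * c₀ - ∑ i, (gi i : ℤ) * ⌈(N : ℚ) * β i / α i⌉

variable {a e gi α β : ι → ℕ} {ℓ g : ℕ} {c₀ : ℤ}

theorem ceilDeg_mul_eq_scaledDeg (hℓ : ℓ ≠ 0) (hP : g * ℓ = ∏ i, a i)
    (hgi : ∀ i, gi i * a i = g * α i) (he : ∀ i, e i * a i = ℓ) (hα : ∀ i, α i ≠ 0)
    (hc₀ : (c₀ : ℚ) = ∑ i, (gi i : ℚ) * β i / α i + (∏ i, (a i : ℚ)) / (ℓ : ℚ) ^ 2) (N : ℕ) :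
    (ceilDeg c₀ gi α β N : ℚ) * ℓ = g * (scaledDeg (fun i => (e i : ℤ)) (fun i => (α i : ℤ))
      (fun i => (β i : ℤ)) (fun i => ⌈(N : ℚ) * β i / α i⌉) N : ℤ) := by
  rw [ceilDeg, Int.cast_scaledDeg]
  push_cast
  exact mul_sub_sum_mul_eq_scaledDeg (a := fun i => (a i : ℚ)) hc₀ (by exact_mod_cast hP.symm)
    (fun i => by exact_mod_cast hgi i) (fun i => by exact_mod_cast he i)
    (fun i => Nat.cast_ne_zero.2 (hα i)) (Nat.cast_ne_zero.2 hℓ) N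

theorem ceilDeg_prod_dvd [DecidableEq ι] (hℓ : ℓ ≠ 0) (hP : g * ℓ = ∏ i, a i)
    (hgi : ∀ i, gi i * a i = g * α i) (he : ∀ i, e i * a i = ℓ)
    (hcross : ∀ i j, j ≠ i → α i ∣ e j) (hinv : ∀ i, α i ∣ e i * β i + 1)
    (hc₀ : (c₀ : ℚ) = ∑ i, (gi i : ℚ) * β i / α i + (∏ i, (a i : ℚ)) / (ℓ : ℚ) ^ 2) (n : ℕ) :
    ceilDeg c₀ gi α β (∏ i, α i) ∣ ceilDeg c₀ gi α β n := by
  have hα : ∀ i, α i ≠ 0 := fun i h => by simpa [h] using hinv i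
  have hdeg := ceilDeg_mul_eq_scaledDeg (e := e) (β := β) hℓ hP hgi he hα hc₀
  obtain ⟨K, hK⟩ := prod_dvd_scaledDeg (β := fun i => (β i : ℤ))
    (fun i j hji => Int.natCast_dvd_natCast.2 (hcross i j hji))
    (fun i => by exact_mod_cast hinv i) (fun i => ⌈(n : ℚ) * β i / α i⌉) n
  have hexact := scaledDeg_eq_self (e := fun i => (e i : ℤ))
    fun i => mul_ceil_mul_div_of_dvd (K := ℚ) (β i) (dvd_prod_of_mem α (mem_univ i))
  have hn : (ceilDeg c₀ gi α β n : ℚ) * ℓ = g * (∏ i, α i : ℕ) * K := by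
    rw [hdeg n, hK]; push_cast; ring
  have hprod : (ceilDeg c₀ gi α β (∏ i, α i) : ℚ) * ℓ = g * (∏ i, α i : ℕ) := by
    rw [hdeg, hexact]; push_cast; ring
  refine ⟨K, Int.cast_injective (α := ℚ) (mul_right_cancel₀ (Nat.cast_ne_zero.2 hℓ) ?_)⟩
  push_cast
  linear_combination hn - K * hprod

end CeilDegree

theorem brieskorn_degD_alpha_dvd_general
    (m : ℕ) (a : Fin m → ℕ)
    (ha : ∀ i, 2 ≤ a i)
    (ℓ : ℕ) (hℓ : ℓ = Finset.univ.lcm a)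
    (ℓi : Fin m → ℕ) (hℓi : ∀ i, ℓi i = (Finset.univ.erase i).lcm a)
    (α : Fin m → ℕ) (hα : ∀ i, α i = ℓ / ℓi i)
    (αp : ℕ) (hαp : αp = ∏ i, α i)
    (e : Fin m → ℕ) (he : ∀ i, e i = ℓ / a i)
    (g : ℕ) (hg : g = (∏ i, a i) / ℓ)
    (gi : Fin m → ℕ) (hgi : ∀ i, gi i = g * α i / a i)
    (β : Fin m → ℕ) (hβ' : ∀ i, α i ∣ e i * β i + 1)
    (c₀ : ℤ)
    (hc₀ : (c₀ : ℚ) = (∑ i, (gi i : ℚ) * (β i : ℚ) / (α i : ℚ))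
        + (∏ i, (a i : ℚ)) / (ℓ : ℚ) ^ 2)
    (degD : ℕ → ℤ)
    (hdegD : ∀ n : ℕ, degD n
        = (n : ℤ) * c₀ - ∑ i, (gi i : ℤ) * ⌈((n : ℚ) * (β i : ℚ)) / (α i : ℚ)⌉)
    :
    ∀ n : ℕ, 0 < degD n → degD αp ∣ degD n := by
  intro n _
  have hdeg : degD = ceilDeg c₀ gi α β := funext hdegD
  have hℓ0 : ℓ ≠ 0 := hℓ ▸ lcm_ne_zero_iff.2 fun i _ => by have := ha i; omega
  have hP : g * ℓ = ∏ i, a i := by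
    rw [hg, hℓ]; exact Nat.div_mul_cancel (lcm_dvd_prod _ _)
  have hgi_mul : ∀ i, gi i * a i = g * α i := fun i => by
    rw [hgi, Nat.div_mul_cancel]
    rw [hg, hα, hℓ, hℓi]
    exact dvd_prod_div_lcm_mul_lcm_div_lcm_erase a (mem_univ i)
  have he_mul : ∀ i, e i * a i = ℓ := fun i => by
    rw [he, Nat.div_mul_cancel (hℓ ▸ dvd_lcm (mem_univ i))]
  have hcross : ∀ i j, j ≠ i → α i ∣ e j := fun i j hji => by
    rw [hα, he, hℓi, hℓ]
    exact lcm_div_lcm_erase_dvd_lcm_div a (mem_univ j) hji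
  rw [hdeg, hαp]
  exact ceilDeg_prod_dvd hℓ0 hP hgi_mul he_mul hcross hβ' hc₀ n

/-- For every `n ≥ 0`, if `deg D_n > 0` then `deg D_α` divides `deg D_n`. -/
theorem brieskorn_degD_alpha_dvd
    (m : ℕ) (hm : 3 ≤ m) (a : Fin m → ℕ)
    (ha : ∀ i, 2 ≤ a i) (hmono : Monotone a)
    (ℓ : ℕ) (hℓ : ℓ = Finset.univ.lcm a)
    (ℓi : Fin m → ℕ) (hℓi : ∀ i, ℓi i = (Finset.univ.erase i).lcm a)
    (α : Fin m → ℕ) (hα : ∀ i, α i = ℓ / ℓi i)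
    (αp : ℕ) (hαp : αp = ∏ i, α i)
    (e : Fin m → ℕ) (he : ∀ i, e i = ℓ / a i)
    (g : ℕ) (hg : g = (∏ i, a i) / ℓ)
    (gi : Fin m → ℕ) (hgi : ∀ i, gi i = g * α i / a i)
    (β : Fin m → ℕ) (hβ : ∀ i, β i < α i) (hβ' : ∀ i, α i ∣ e i * β i + 1)
    (c₀ : ℤ) (hc₀pos : 0 < c₀)
    (hc₀ : (c₀ : ℚ) = (∑ i, (gi i : ℚ) * (β i : ℚ) / (α i : ℚ))
        + (∏ i, (a i : ℚ)) / (ℓ : ℚ) ^ 2)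
    (degD : ℕ → ℤ)
    (hdegD : ∀ n : ℕ, degD n
        = (n : ℤ) * c₀ - ∑ i, (gi i : ℤ) * ⌈((n : ℚ) * (β i : ℚ)) / (α i : ℚ)⌉)
    :
    ∀ n : ℕ, 0 < degD n → degD αp ∣ degD n :=
  brieskorn_degD_alpha_dvd_general m a ha ℓ hℓ ℓi hℓi α hα αp hαp e he g hg gi hgi β hβ' c₀ hc₀ degD
    hdegD
end

section
/- For each index i: if α_i = 1 then deg D_{e_i} = ĝ_i, and if α_i ≥ 2 then deg D_{e_i} = 0. (This is the degree form of the identity Z^{(i)} = L_{e_i} for the exceptional part of the coordinate function x_i on the minimal good resolution.) -/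
/-!
From `c₀ = Σ_j ĝ_j β_j/α_j + ∏ a/ℓ²` one gets
`deg D_n = n ∏ a/ℓ² - Σ_j ĝ_j (⌈nβ_j/α_j⌉ - nβ_j/α_j)`. For `n = e_i`, every `α_j` with `j ≠ i`
divides `e_i` (because `a_i ∣ ℓ_j`), so only the `i`-th defect survives, while
`e_i ∏ a/ℓ² = ĝ/a_i = ĝ_i/α_i`. That defect is `0` when `α_i = 1`, and `1/α_i` when `α_i ≥ 2`,
since `e_iβ_i ≡ -1 (mod α_i)`.
-/

open Finset

namespace Finset

variable {ι : Type*} [DecidableEq ι] (s : Finset ι) (a : ι → ℕ)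

theorem lcm_div_lcm_erase_dvd_lcm_div {i j : ι} (hi : i ∈ s) (hji : j ≠ i) :
    s.lcm a / (s.erase j).lcm a ∣ s.lcm a / a i :=
  Nat.div_dvd_div_left (lcm_mono (erase_subset j s)) (dvd_lcm (mem_erase.2 ⟨hji.symm, hi⟩))

theorem prod_div_lcm_mul_lcm_div_lcm_erase {i : ι} (hi : i ∈ s) :
    (∏ j ∈ s, a j) / s.lcm a * (s.lcm a / (s.erase i).lcm a)
      = a i * ((∏ j ∈ s.erase i, a j) / (s.erase i).lcm a) := by
  rw [Nat.div_mul_div (lcm_dvd_prod s a) (lcm_mono (erase_subset i s)), ← mul_prod_erase s a hi,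
    Nat.mul_div_assoc _ (lcm_dvd_prod _ _)]

theorem lcm_div_mul_prod_div_lcm_sq {i : ι} (hi : i ∈ s) (hs : s.lcm a ≠ 0) :
    ((s.lcm a / a i : ℕ) : ℚ) * (∏ j ∈ s, (a j : ℚ)) / ((s.lcm a : ℕ) : ℚ) ^ 2
      = (((∏ j ∈ s, a j) / s.lcm a * (s.lcm a / (s.erase i).lcm a) / a i : ℕ) : ℚ)
        / ((s.lcm a / (s.erase i).lcm a : ℕ) : ℚ) := by
  have hai : a i ≠ 0 := fun h => hs (lcm_eq_zero_iff.2 ⟨i, hi, h⟩)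
  have herase : (s.erase i).lcm a ≠ 0 := ne_zero_of_dvd_ne_zero hs (lcm_mono (erase_subset i s))
  rw [prod_div_lcm_mul_lcm_div_lcm_erase s a hi, Nat.mul_div_cancel_left _ (Nat.pos_of_ne_zero hai),
    Nat.cast_div_charZero (dvd_lcm hi), Nat.cast_div_charZero (lcm_dvd_prod _ _),
    Nat.cast_div_charZero (lcm_mono (erase_subset i s)), ← mul_prod_erase s _ hi]
  push_cast
  field_simp

end Finset

theorem ceil_mul_div_sub_self_of_dvd {α e : ℕ} (h : α ∣ e) (β : ℕ) :
    (⌈(e * β : ℚ) / α⌉ : ℚ) - e * β / α = 0 := by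
  have hq : ((e * β : ℕ) : ℚ) / α = ((e * β / α : ℕ) : ℚ) :=
    (Nat.cast_div_charZero (h.mul_right β)).symm
  push_cast at hq
  rw [hq, Int.ceil_natCast, Int.cast_natCast, sub_self]

theorem ceil_mul_div_sub_self_of_dvd_add_one {α e β : ℕ} (hα : 2 ≤ α) (h : α ∣ e * β + 1) :
    (⌈(e * β : ℚ) / α⌉ : ℚ) - e * β / α = 1 / α := by
  obtain ⟨k, hk⟩ := h
  have hα' : (2 : ℚ) ≤ α := by exact_mod_cast hα
  have heβ : (e * β : ℚ) = α * k - 1 := by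
    rw [eq_sub_iff_add_eq]; exact_mod_cast hk
  have hceil : ⌈(e * β : ℚ) / α⌉ = k := by
    rw [Int.ceil_eq_iff, heβ, lt_div_iff₀ (by linarith), div_le_iff₀ (by linarith)]
    push_cast
    constructor <;> nlinarith
  rw [hceil, heβ]
  field_simp
  push_cast
  ring

theorem mul_sub_sum_mul_ceil_eq {ι : Type*} (s : Finset ι) (n : ℕ) (w : ι → ℕ) (r : ι → ℚ)
    (K : ℚ) (c : ℤ) (hc : (c : ℚ) = ∑ j ∈ s, w j * r j + K) :
    ((n * c - ∑ j ∈ s, (w j : ℤ) * ⌈n * r j⌉ : ℤ) : ℚ)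
      = n * K - ∑ j ∈ s, w j * (⌈n * r j⌉ - n * r j) := by
  push_cast
  simp only [hc, mul_add, mul_sum, mul_sub, sum_sub_distrib, mul_left_comm (n : ℚ)]
  ring

theorem brieskorn_degD_e_general
    (m : ℕ) (a : Fin m → ℕ)
    (ℓ : ℕ) (hℓ : ℓ = Finset.univ.lcm a)
    (ℓi : Fin m → ℕ) (hℓi : ∀ i, ℓi i = (Finset.univ.erase i).lcm a)
    (α : Fin m → ℕ) (hα : ∀ i, α i = ℓ / ℓi i)
    (e : Fin m → ℕ) (he : ∀ i, e i = ℓ / a i)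
    (g : ℕ) (hg : g = (∏ i, a i) / ℓ)
    (gi : Fin m → ℕ) (hgi : ∀ i, gi i = g * α i / a i)
    (β : Fin m → ℕ) (hβ' : ∀ i, α i ∣ e i * β i + 1)
    (c₀ : ℤ)
    (hc₀ : (c₀ : ℚ) = (∑ i, (gi i : ℚ) * (β i : ℚ) / (α i : ℚ))
        + (∏ i, (a i : ℚ)) / (ℓ : ℚ) ^ 2)
    (degD : ℕ → ℤ)
    (hdegD : ∀ n : ℕ, degD n
        = (n : ℤ) * c₀ - ∑ i, (gi i : ℤ) * ⌈((n : ℚ) * (β i : ℚ)) / (α i : ℚ)⌉)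
    :
    ∀ i : Fin m,
      (α i = 1 → degD (e i) = (gi i : ℤ)) ∧
      (2 ≤ α i → degD (e i) = 0) := by
  intro i
  simp only [mul_div_assoc] at hc₀ hdegD
  have hdeg : (degD (e i) : ℚ) = e i * ((∏ j, (a j : ℚ)) / ℓ ^ 2)
      - gi i * (⌈(e i * β i : ℚ) / α i⌉ - e i * β i / α i) := by
    rw [hdegD, mul_sub_sum_mul_ceil_eq _ _ _ _ _ _ hc₀, sum_eq_single i]
    · simp only [mul_div_assoc]
    · intro j _ hji
      have hdvd : α j ∣ e i := by
        rw [hα, he, hℓi, hℓ]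
        exact lcm_div_lcm_erase_dvd_lcm_div _ a (mem_univ i) hji
      rw [← mul_div_assoc, ceil_mul_div_sub_self_of_dvd hdvd, mul_zero]
    · simp
  have hK : 0 < α i → (e i : ℚ) * ((∏ j, (a j : ℚ)) / ℓ ^ 2) = gi i / α i := by
    intro hαi
    have hℓ0 : ℓ ≠ 0 := by rintro rfl; simp [hα] at hαi
    rw [← mul_div_assoc, he, hgi, hg, hα, hℓi, hℓ]
    exact lcm_div_mul_prod_div_lcm_sq _ a (mem_univ i) (hℓ ▸ hℓ0)
  refine ⟨fun h1 => ?_, fun h2 => ?_⟩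
  · have hdeg1 : (degD (e i) : ℚ) = gi i := by
      rw [hdeg, hK (by omega), ceil_mul_div_sub_self_of_dvd (h1 ▸ one_dvd _), h1]
      simp
    exact_mod_cast hdeg1
  · have hdeg0 : (degD (e i) : ℚ) = 0 := by
      rw [hdeg, hK (by omega), ceil_mul_div_sub_self_of_dvd_add_one h2 (hβ' i)]
      ring
    exact_mod_cast hdeg0

/-- If `α i = 1` then `deg D_{e i} = ĝ i`, and if `α i ≥ 2` then `deg D_{e i} = 0`. -/
theorem brieskorn_degD_e
    (m : ℕ) (hm : 3 ≤ m) (a : Fin m → ℕ)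
    (ha : ∀ i, 2 ≤ a i) (hmono : Monotone a)
    (ℓ : ℕ) (hℓ : ℓ = Finset.univ.lcm a)
    (ℓi : Fin m → ℕ) (hℓi : ∀ i, ℓi i = (Finset.univ.erase i).lcm a)
    (α : Fin m → ℕ) (hα : ∀ i, α i = ℓ / ℓi i)
    (αp : ℕ) (hαp : αp = ∏ i, α i)
    (e : Fin m → ℕ) (he : ∀ i, e i = ℓ / a i)
    (g : ℕ) (hg : g = (∏ i, a i) / ℓ)
    (gi : Fin m → ℕ) (hgi : ∀ i, gi i = g * α i / a i)
    (β : Fin m → ℕ) (hβ : ∀ i, β i < α i) (hβ' : ∀ i, α i ∣ e i * β i + 1)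
    (c₀ : ℤ) (hc₀pos : 0 < c₀)
    (hc₀ : (c₀ : ℚ) = (∑ i, (gi i : ℚ) * (β i : ℚ) / (α i : ℚ))
        + (∏ i, (a i : ℚ)) / (ℓ : ℚ) ^ 2)
    (degD : ℕ → ℤ)
    (hdegD : ∀ n : ℕ, degD n
        = (n : ℤ) * c₀ - ∑ i, (gi i : ℤ) * ⌈((n : ℚ) * (β i : ℚ)) / (α i : ℚ)⌉)
    :
    ∀ i : Fin m,
      (α i = 1 → degD (e i) = (gi i : ℤ)) ∧
      (2 ≤ α i → degD (e i) = 0) :=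
  brieskorn_degD_e_general m a ℓ hℓ ℓi hℓi α hα e he g hg gi hgi β hβ' c₀ hc₀ degD hdegD
end

section
/- The smallest positive integer n with deg D_n ≥ 0 equals min(e_m, α). (This integer is the coefficient of the central curve E_0 in the fundamental cycle Z_X.) -/
theorem myprod_dvd {ι : Type*} (s : Finset ι) (f : ι → ℕ) (n : ℕ)
    (hc : ∀ i ∈ s, ∀ j ∈ s, i ≠ j → Nat.Coprime (f i) (f j))
    (hd : ∀ i ∈ s, f i ∣ n) : (∏ i ∈ s, f i) ∣ n := by
  classical
  induction s using Finset.induction_on with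
  | empty => simp
  | @insert a t hni ih =>
    rw [Finset.prod_insert hni]
    have h1 : Nat.Coprime (f a) (∏ i ∈ t, f i) :=
      Nat.Coprime.prod_right fun j hj =>
        hc a (Finset.mem_insert_self a t) j (Finset.mem_insert_of_mem hj)
          (by rintro rfl; exact hni hj)
    exact (Nat.Coprime.mul_dvd_of_dvd_of_dvd h1 (hd a (Finset.mem_insert_self a t))
      (ih (fun i hi j hj hij => hc i (Finset.mem_insert_of_mem hi) j (Finset.mem_insert_of_mem hj) hij)
        (fun i hi => hd i (Finset.mem_insert_of_mem hi))))

theorem myceil (x : ℤ) (d : ℕ) : (⌈(x : ℚ) / (d : ℚ)⌉ : ℤ) = -((-x) / (d : ℤ)) := by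
  rw [← Rat.floor_intCast_div_natCast (-x) d]
  rw [show ((-x : ℤ) : ℚ) / (d : ℚ) = -((x:ℚ)/(d:ℚ)) by push_cast; ring]
  rw [Int.floor_neg, Int.neg_neg]

/-- remainder `(-nβ) mod α` -/
def rr (αi βi n : ℕ) : ℤ := (-((n : ℤ) * (βi : ℤ))) % (αi : ℤ)

theorem rr_nonneg (αi βi n : ℕ) (h : 0 < αi) : 0 ≤ rr αi βi n :=
  Int.emod_nonneg _ (by exact_mod_cast h.ne')

theorem rr_eq_zero_of_dvd (αi βi n : ℕ) (h : αi ∣ n) : rr αi βi n = 0 := by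
  unfold rr
  apply Int.emod_eq_zero_of_dvd
  rw [Int.dvd_neg]
  exact Dvd.dvd.mul_right (by exact_mod_cast h) _

theorem dvd_of_rr_eq_zero (αi βi ei n : ℕ) (hb : αi ∣ ei * βi + 1)
    (h : rr αi βi n = 0) : αi ∣ n := by
  unfold rr at h
  have h1 : (αi : ℤ) ∣ (n : ℤ) * (βi : ℤ) := by
    have := Int.dvd_of_emod_eq_zero h
    rwa [Int.dvd_neg] at this
  have h2 : αi ∣ n * βi := by exact_mod_cast h1
  have h3 : αi ∣ n * (ei * βi + 1) := Dvd.dvd.mul_left hb n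
  have h4 : αi ∣ ei * (n * βi) := Dvd.dvd.mul_left h2 ei
  have h5 : n * (ei * βi + 1) = ei * (n * βi) + n := by ring
  rw [h5] at h3
  exact (Nat.dvd_add_right h4).mp h3

theorem rr_le_one (αi βi ei : ℕ) (hα : 0 < αi) (hb : αi ∣ ei * βi + 1) :
    rr αi βi ei ≤ 1 := by
  obtain ⟨k, hk⟩ := hb
  unfold rr
  have hx : -((ei : ℤ) * (βi : ℤ)) = 1 + (αi : ℤ) * (-(k : ℤ)) := by
    have : (ei : ℤ) * (βi : ℤ) + 1 = (αi : ℤ) * (k : ℤ) := by exact_mod_cast hk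
    linarith
  rw [hx, Int.add_mul_emod_self_left]
  rcases eq_or_lt_of_le (Nat.one_le_iff_ne_zero.mpr hα.ne') with h1 | h1
  · rw [← h1]; simp
  · rw [Int.emod_eq_of_lt (by norm_num) (by exact_mod_cast h1)]

theorem rr_cast (αi βi n : ℕ) :
    ((rr αi βi n : ℤ) : ℚ)
      = (αi : ℚ) * ((⌈((n : ℚ) * (βi : ℚ)) / (αi : ℚ)⌉ : ℤ) : ℚ) - (n : ℚ) * (βi : ℚ) := by
  have hC : (⌈((n : ℚ) * (βi : ℚ)) / (αi : ℚ)⌉ : ℤ)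
      = -((-((n : ℤ) * (βi : ℤ))) / (αi : ℤ)) := by
    rw [← myceil ((n : ℤ) * (βi : ℤ)) αi]
    congr 2
    push_cast; ring
  have : rr αi βi n = (αi : ℤ) * (⌈((n : ℚ) * (βi : ℚ)) / (αi : ℚ)⌉ : ℤ)
      - (n : ℤ) * (βi : ℤ) := by
    rw [hC]; unfold rr; rw [Int.emod_def]; ring
  rw [this]; push_cast; ring

/-- The smallest positive `n` with `deg D_n ≥ 0` equals `min (e m) α`
(the coefficient of the central curve in the fundamental cycle). -/
theorem brieskorn_fundamental_cycle_coeff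
    (m : ℕ) (hm : 3 ≤ m) (a : Fin m → ℕ)
    (ha : ∀ i, 2 ≤ a i) (hmono : Monotone a)
    (ℓ : ℕ) (hℓ : ℓ = Finset.univ.lcm a)
    (ℓi : Fin m → ℕ) (hℓi : ∀ i, ℓi i = (Finset.univ.erase i).lcm a)
    (α : Fin m → ℕ) (hα : ∀ i, α i = ℓ / ℓi i)
    (αp : ℕ) (hαp : αp = ∏ i, α i)
    (e : Fin m → ℕ) (he : ∀ i, e i = ℓ / a i)
    (g : ℕ) (hg : g = (∏ i, a i) / ℓ)
    (gi : Fin m → ℕ) (hgi : ∀ i, gi i = g * α i / a i)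
    (β : Fin m → ℕ) (hβ : ∀ i, β i < α i) (hβ' : ∀ i, α i ∣ e i * β i + 1)
    (c₀ : ℤ) (hc₀pos : 0 < c₀)
    (hc₀ : (c₀ : ℚ) = (∑ i, (gi i : ℚ) * (β i : ℚ) / (α i : ℚ))
        + (∏ i, (a i : ℚ)) / (ℓ : ℚ) ^ 2)
    (degD : ℕ → ℤ)
    (hdegD : ∀ n : ℕ, degD n
        = (n : ℤ) * c₀ - ∑ i, (gi i : ℤ) * ⌈((n : ℚ) * (β i : ℚ)) / (α i : ℚ)⌉)
    :
    IsLeast {n : ℕ | 0 < n ∧ 0 ≤ degD n} (min (e ⟨m - 1, by omega⟩) αp) := by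
  classical
  set last : Fin m := ⟨m - 1, by omega⟩ with hlast
  have ha1 : ∀ i, 0 < a i := fun i => lt_of_lt_of_le two_pos (ha i)
  have hPpos : 0 < ∏ i, a i := Finset.prod_pos fun i _ => ha1 i
  have hℓdvdP : ℓ ∣ ∏ i, a i := by
    rw [hℓ]; exact Finset.lcm_dvd fun i _ => Finset.dvd_prod_of_mem a (Finset.mem_univ i)
  have hℓpos : 0 < ℓ := by
    rcases Nat.eq_zero_or_pos ℓ with h | h
    · rw [h, zero_dvd_iff] at hℓdvdP; omega
    · exact h
  have haℓ : ∀ i, a i ∣ ℓ := fun i => hℓ ▸ Finset.dvd_lcm (Finset.mem_univ i)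
  have hℓiℓ : ∀ i, ℓi i ∣ ℓ := by
    intro i; rw [hℓi, hℓ]
    exact Finset.lcm_dvd fun j hj => Finset.dvd_lcm (Finset.mem_univ j)
  have hℓipos : ∀ i, 0 < ℓi i := by
    intro i
    rcases Nat.eq_zero_or_pos (ℓi i) with h | h
    · have h2 := hℓiℓ i; rw [h, zero_dvd_iff] at h2; omega
    · exact h
  have hαℓ : ∀ i, α i * ℓi i = ℓ := fun i => by
    rw [hα]; exact Nat.div_mul_cancel (hℓiℓ i)
  have heaℓ : ∀ i, e i * a i = ℓ := fun i => by
    rw [he]; exact Nat.div_mul_cancel (haℓ i)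
  have hαpos : ∀ i, 0 < α i := by
    intro i
    rcases Nat.eq_zero_or_pos (α i) with h0 | h0
    · have h := hαℓ i; rw [h0, zero_mul] at h; omega
    · exact h0
  have hepos : ∀ i, 0 < e i := by
    intro i
    rcases Nat.eq_zero_or_pos (e i) with h0 | h0
    · have h := heaℓ i; rw [h0, zero_mul] at h; omega
    · exact h0
  have hgℓ : g * ℓ = ∏ i, a i := by rw [hg]; exact Nat.div_mul_cancel hℓdvdP
  have hℓiprod : ∀ i, ℓi i ∣ ∏ j ∈ Finset.univ.erase i, a j := by
    intro i; rw [hℓi]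
    exact Finset.lcm_dvd fun j hj => Finset.dvd_prod_of_mem a hj
  have hgia : ∀ i, gi i * a i = g * α i := by
    intro i
    obtain ⟨t, ht⟩ := hℓiprod i
    have hP : ∏ j, a j = a i * (ℓi i * t) := by
      rw [← ht, Finset.mul_prod_erase _ _ (Finset.mem_univ i)]
    have h1 : g * α i = a i * t := by
      have h2 : g * α i * ℓi i = a i * t * ℓi i := by
        rw [mul_assoc, hαℓ i, hgℓ, hP]; ring
      exact Nat.eq_of_mul_eq_mul_right (hℓipos i) h2
    have h3 : a i ∣ g * α i := ⟨t, h1⟩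
    rw [hgi, Nat.div_mul_cancel h3]
  have hco : ∀ i, Nat.Coprime (α i) (e i) := by
    intro i
    have h1 : Nat.gcd (α i) (e i) ∣ 1 := by
      have hd1 : Nat.gcd (α i) (e i) ∣ e i * β i + 1 :=
        dvd_trans (Nat.gcd_dvd_left _ _) (hβ' i)
      have hd2 : Nat.gcd (α i) (e i) ∣ e i * β i :=
        Dvd.dvd.mul_right (Nat.gcd_dvd_right _ _) _
      have := Nat.dvd_sub hd1 hd2
      simpa using this
    exact Nat.dvd_one.mp h1
  have hαe : ∀ i j, i ≠ j → α i ∣ e j := by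
    intro i j hij
    rw [he]
    rw [Nat.dvd_div_iff_mul_dvd (haℓ j)]
    rw [← hαℓ i]
    have haj : a j ∣ ℓi i := by
      rw [hℓi]
      exact Finset.dvd_lcm (Finset.mem_erase.mpr ⟨hij.symm, Finset.mem_univ j⟩)
    calc a j * α i ∣ ℓi i * α i := mul_dvd_mul_right haj _
      _ = α i * ℓi i := mul_comm _ _
  have hcop : ∀ i j, i ≠ j → Nat.Coprime (α i) (α j) := fun i j hij =>
    Nat.Coprime.coprime_dvd_right (hαe j i hij.symm) (hco i)
  -- the key rational identity
  have key : ∀ n : ℕ, (degD n : ℚ)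
      = ((∏ i, (a i : ℚ)) / (ℓ : ℚ) ^ 2)
        * ((n : ℚ) - ((∑ i, (e i : ℤ) * rr (α i) (β i) n : ℤ) : ℚ)) := by
    intro n
    have hterm : ∀ i : Fin m,
        (n : ℚ) * ((gi i : ℚ) * (β i : ℚ) / (α i : ℚ))
          - (gi i : ℚ) * ((⌈((n : ℚ) * (β i : ℚ)) / (α i : ℚ)⌉ : ℤ) : ℚ)
        = -(((∏ j, (a j : ℚ)) / (ℓ : ℚ) ^ 2)
            * ((e i : ℚ) * ((rr (α i) (β i) n : ℤ) : ℚ))) := by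
      intro i
      have ha0 : (a i : ℚ) ≠ 0 := by exact_mod_cast (ha1 i).ne'
      have hα0 : (α i : ℚ) ≠ 0 := by exact_mod_cast (hαpos i).ne'
      have he0 : (e i : ℚ) ≠ 0 := by exact_mod_cast (hepos i).ne'
      have hq1 : (gi i : ℚ) * (a i : ℚ) = (g : ℚ) * (α i : ℚ) := by
        exact_mod_cast hgia i
      have hq2 : (e i : ℚ) * (a i : ℚ) = (ℓ : ℚ) := by exact_mod_cast heaℓ i
      have hq3 : (∏ j, (a j : ℚ)) = (g : ℚ) * (ℓ : ℚ) := by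
        rw [← Nat.cast_prod, ← hgℓ]; push_cast; ring
      have hq1' : (gi i : ℚ) = (g : ℚ) * (α i : ℚ) / (a i : ℚ) := by
        rw [eq_div_iff ha0]; exact hq1
      rw [rr_cast, hq1', hq3, ← hq2]
      field_simp
      ring
    have h0 : (degD n : ℚ) = (n : ℚ) * (c₀ : ℚ)
        - ∑ i, (gi i : ℚ) * ((⌈((n : ℚ) * (β i : ℚ)) / (α i : ℚ)⌉ : ℤ) : ℚ) := by
      rw [hdegD n]; push_cast; ring
    rw [h0, hc₀]
    have hexp : (n : ℚ) * ((∑ i, (gi i : ℚ) * (β i : ℚ) / (α i : ℚ))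
          + (∏ i, (a i : ℚ)) / (ℓ : ℚ) ^ 2)
        - ∑ i, (gi i : ℚ) * ((⌈((n : ℚ) * (β i : ℚ)) / (α i : ℚ)⌉ : ℤ) : ℚ)
        = (∑ i, ((n : ℚ) * ((gi i : ℚ) * (β i : ℚ) / (α i : ℚ))
            - (gi i : ℚ) * ((⌈((n : ℚ) * (β i : ℚ)) / (α i : ℚ)⌉ : ℤ) : ℚ)))
          + (n : ℚ) * ((∏ i, (a i : ℚ)) / (ℓ : ℚ) ^ 2) := by
      rw [Finset.sum_sub_distrib, ← Finset.mul_sum]; ring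
    rw [hexp, Finset.sum_congr rfl (fun i _ => hterm i)]
    push_cast
    rw [Finset.sum_neg_distrib, mul_sub, Finset.mul_sum]
    ring
  -- positivity of the factor
  have hfac : (0 : ℚ) < (∏ i, (a i : ℚ)) / (ℓ : ℚ) ^ 2 := by
    apply div_pos
    · rw [← Nat.cast_prod]; exact_mod_cast hPpos
    · have : (0 : ℚ) < (ℓ : ℚ) := by exact_mod_cast hℓpos
      positivity
  -- the combinatorial criterion
  have hiff : ∀ n : ℕ, 0 ≤ degD n ↔ (∑ i, (e i : ℤ) * rr (α i) (β i) n) ≤ (n : ℤ) := by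
    intro n
    rw [show (0 ≤ degD n) ↔ ((0 : ℚ) ≤ (degD n : ℚ)) by exact_mod_cast Iff.rfl]
    rw [key n]
    rw [mul_nonneg_iff_of_pos_left hfac]
    rw [sub_nonneg]
    exact_mod_cast Iff.rfl
  constructor
  · -- membership
    constructor
    · exact lt_min (hepos last) (hαp ▸ Finset.prod_pos fun i _ => hαpos i)
    · rw [hiff]
      rcases le_total (e last) αp with hle | hle
      · rw [min_eq_left hle]
        have hsum : (∑ i, (e i : ℤ) * rr (α i) (β i) (e last))
            = (e last : ℤ) * rr (α last) (β last) (e last) := by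
          apply Finset.sum_eq_single_of_mem last (Finset.mem_univ last)
          intro j _ hj
          rw [rr_eq_zero_of_dvd _ _ _ (hαe j last hj), mul_zero]
        rw [hsum]
        have h1 : rr (α last) (β last) (e last) ≤ 1 :=
          rr_le_one _ _ _ (hαpos last) (hβ' last)
        nlinarith [rr_nonneg (α last) (β last) (e last) (hαpos last),
          (by exact_mod_cast Nat.zero_le (e last) : (0:ℤ) ≤ (e last : ℤ))]
      · rw [min_eq_right hle]
        have hz : ∀ i : Fin m, rr (α i) (β i) αp = 0 := fun i =>
          rr_eq_zero_of_dvd _ _ _ (hαp ▸ Finset.dvd_prod_of_mem α (Finset.mem_univ i))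
        simp [hz]
  · -- lower bound
    rintro n ⟨hnpos, hdg⟩
    rw [hiff] at hdg
    rcases le_or_gt αp n with h | h
    · exact le_trans (min_le_right _ _) h
    · have hex : ∃ j, rr (α j) (β j) n ≠ 0 := by
        by_contra hall
        push_neg at hall
        have hdvd : αp ∣ n := by
          rw [hαp]
          exact myprod_dvd _ _ _ (fun i _ j _ hij => hcop i j hij)
            (fun i _ => dvd_of_rr_eq_zero (α i) (β i) (e i) n (hβ' i) (hall i))
        have := Nat.le_of_dvd hnpos hdvd
        omega
      obtain ⟨j, hj⟩ := hex
      have hrj : 1 ≤ rr (α j) (β j) n :=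
        lt_of_le_of_ne (rr_nonneg _ _ _ (hαpos j)) (Ne.symm hj)
      have hej : e last ≤ e j := by
        rw [he, he]
        exact Nat.div_le_div_left (hmono (by
          rw [hlast, Fin.le_def]
          exact Nat.le_sub_one_of_lt j.isLt)) (ha1 j)
      have hsumge : (e j : ℤ) * rr (α j) (β j) n ≤ ∑ i, (e i : ℤ) * rr (α i) (β i) n :=
        Finset.single_le_sum
          (fun i _ => mul_nonneg (by exact_mod_cast Nat.zero_le (e i))
            (rr_nonneg _ _ _ (hαpos i)))
          (Finset.mem_univ j)
      have hejn : (e j : ℤ) ≤ (n : ℤ) := by nlinarith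
      have : e last ≤ n := by
        have : (e last : ℤ) ≤ (n : ℤ) := le_trans (by exact_mod_cast hej) hejn
        exact_mod_cast this
      exact le_trans (min_le_left _ _) this
end

section
/- For every integer m_0 > 0, the set 𝒟(m_0) is nonempty and has a smallest element with respect to the componentwise order (i.e., there exists D ∈ 𝒟(m_0) with D ≤ D' for every D' ∈ 𝒟(m_0)). -/
/-- Intersection number `D·E i = m_{i−1} − c i * m i + m_{i+1}` (with `m_{r+1} := 0`)
of the cycle `D = Σ m_j E_j` with the chain component `E i`, `1 ≤ i ≤ r`. -/
def chainDot (r : ℕ) (c : ℕ → ℤ) (D : ℕ → ℤ) (i : ℕ) : ℤ :=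
  D (i - 1) - c i * D i + (if i < r then D (i + 1) else 0)

/-- `D ∈ 𝒟(m₀)`: the coefficient of `E_0` is `m₀`, the coefficients `m_1, …, m_r`
are positive, and `D·E i ≤ 0` for `1 ≤ i ≤ r`. -/
def memD (r : ℕ) (c : ℕ → ℤ) (m₀ : ℤ) (D : ℕ → ℤ) : Prop :=
  D 0 = m₀ ∧ (∀ i, 1 ≤ i → i ≤ r → 0 < D i) ∧
    (∀ i, 1 ≤ i → i ≤ r → chainDot r c D i ≤ 0)

/-- The pointwise min of two elements of `𝒟(m₀)` is again in `𝒟(m₀)`. -/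
lemma memD_min (r : ℕ) (c : ℕ → ℤ) (hc : ∀ i, 1 ≤ i → i ≤ r → 2 ≤ c i)
    (m₀ : ℤ) {D D' : ℕ → ℤ} (hD : memD r c m₀ D) (hD' : memD r c m₀ D') :
    memD r c m₀ (fun j => min (D j) (D' j)) := by
  obtain ⟨h0, hpos, hdot⟩ := hD
  obtain ⟨h0', hpos', hdot'⟩ := hD'
  refine ⟨by simp [h0, h0'], fun i h1 h2 => lt_min (hpos i h1 h2) (hpos' i h1 h2),
    fun i h1 h2 => ?_⟩
  have hd := hdot i h1 h2
  have hd' := hdot' i h1 h2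
  unfold chainDot at *
  have hp1 : min (D (i-1)) (D' (i-1)) ≤ D (i-1) := min_le_left _ _
  have hp1' : min (D (i-1)) (D' (i-1)) ≤ D' (i-1) := min_le_right _ _
  have hp2 : min (D (i+1)) (D' (i+1)) ≤ D (i+1) := min_le_left _ _
  have hp2' : min (D (i+1)) (D' (i+1)) ≤ D' (i+1) := min_le_right _ _
  rcases le_total (D i) (D' i) with h | h
  · have hmin : min (D i) (D' i) = D i := min_eq_left h
    simp only [hmin]
    split_ifs at hd ⊢ with hir <;> linarith
  · have hmin : min (D i) (D' i) = D' i := min_eq_right h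
    simp only [hmin]
    split_ifs at hd' ⊢ with hir <;> linarith

/-- For every `m₀ > 0`, the set `𝒟(m₀)` is nonempty and has a smallest element
with respect to the componentwise order on the coefficients of `E_0, …, E_r`. -/
theorem chain_smallest_exists (r : ℕ) (hr : 1 ≤ r) (c : ℕ → ℤ)
    (hc : ∀ i, 1 ≤ i → i ≤ r → 2 ≤ c i) (m₀ : ℤ) (hm₀ : 0 < m₀) :
    ∃ D : ℕ → ℤ, memD r c m₀ D ∧
      ∀ D' : ℕ → ℤ, memD r c m₀ D' → ∀ i ≤ r, D i ≤ D' i := by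
  classical
  have hconst : memD r c m₀ (fun _ => m₀) := by
    refine ⟨rfl, fun i _ _ => hm₀, fun i h1 h2 => ?_⟩
    have hci := hc i h1 h2
    unfold chainDot
    split_ifs with h <;> nlinarith
  set f : (ℕ → ℤ) → ℕ := fun D => (∑ i ∈ Finset.Icc 1 r, D i).toNat with hf
  have hT : ∃ n, ∃ D, memD r c m₀ D ∧ f D = n := ⟨_, _, hconst, rfl⟩
  obtain ⟨D, hD, hmin⟩ : ∃ D, memD r c m₀ D ∧ ∀ D', memD r c m₀ D' → f D ≤ f D' := by
    obtain ⟨D, hD, hfD⟩ := Nat.find_spec hT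
    exact ⟨D, hD, fun D' hD' => hfD ▸ Nat.find_le ⟨D', hD', rfl⟩⟩
  refine ⟨D, hD, ?_⟩
  intro D' hD' i hi
  rcases Nat.eq_zero_or_pos i with rfl | hi1
  · rw [hD.1, hD'.1]
  by_contra hlt
  push_neg at hlt
  set E : ℕ → ℤ := fun j => min (D j) (D' j) with hE
  have hEmem := memD_min r c hc m₀ hD hD'
  have hsum : ∑ j ∈ Finset.Icc 1 r, E j < ∑ j ∈ Finset.Icc 1 r, D j := by
    refine Finset.sum_lt_sum (fun j _ => min_le_left _ _) ⟨i, ?_, ?_⟩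
    · exact Finset.mem_Icc.mpr ⟨hi1, hi⟩
    · exact min_lt_iff.mpr (Or.inr hlt)
  have hpos : 0 < ∑ j ∈ Finset.Icc 1 r, D j := by
    refine Finset.sum_pos (fun j hj => ?_) ⟨1, Finset.mem_Icc.mpr ⟨le_refl 1, hr⟩⟩
    rw [Finset.mem_Icc] at hj
    exact hD.2.1 j hj.1 hj.2
  have : f E < f D := by
    simp only [hf]
    omega
  exact absurd (hmin E hEmem) (Nat.not_le.mpr this)
end

section
/- For every D ∈ 𝒟(m_0) there exists an effective cycle F supported on E_2,…,E_r (i.e., a vector F = (0, 0, f_2, …, f_r) with all f_i ≥ 0) such that (D+F)·E_i = 0 for every 1 ≤ i < r. -/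
/-- Auxiliary recursive sequence used to build the completing cycle. -/
def gAux (c D : ℕ → ℤ) : ℕ → ℤ
  | 0 => 0
  | 1 => 0
  | (n+2) => c (n+1) * (D (n+1) + gAux c D (n+1)) - (D n + gAux c D n) - D (n+2)



/-- For every `D ∈ 𝒟(m₀)` there exists an effective cycle `F` supported on
`E_2, …, E_r` such that `(D + F)·E i = 0` for every `1 ≤ i < r`. -/
theorem chain_completion_exists (r : ℕ) (hr : 1 ≤ r) (c : ℕ → ℤ)
    (hc : ∀ i, 1 ≤ i → i ≤ r → 2 ≤ c i) (m₀ : ℤ) (hm₀ : 0 < m₀)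
    (D : ℕ → ℤ) (hD : memD r c m₀ D) :
    ∃ F : ℕ → ℤ, (∀ i, 0 ≤ F i) ∧ (∀ i, i ≤ 1 → F i = 0) ∧ (∀ i, r < i → F i = 0) ∧
      ∀ i, 1 ≤ i → i < r → chainDot r c (D + F) i = 0 := by
  obtain ⟨-, -, hdot⟩ := hD
  have key : ∀ k, k + 1 ≤ r → 0 ≤ gAux c D k ∧ gAux c D k ≤ gAux c D (k + 1) := by
    intro k
    induction k with
    | zero => intro _; simp [gAux]
    | succ k ih =>
      intro hk
      obtain ⟨h0, h1⟩ := ih (by omega)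
      have hg1 : 0 ≤ gAux c D (k + 1) := le_trans h0 h1
      refine ⟨hg1, ?_⟩
      have hcd : chainDot r c D (k + 1) ≤ 0 := hdot (k + 1) (by omega) (by omega)
      have hlt : k + 1 < r := by omega
      have hcd' : D k - c (k + 1) * D (k + 1) + D (k + 2) ≤ 0 := by
        simpa [chainDot, hlt] using hcd
      have hc2 : 2 ≤ c (k + 1) := hc (k + 1) (by omega) (by omega)
      have heq : gAux c D (k + 2) =
          c (k + 1) * (D (k + 1) + gAux c D (k + 1)) - (D k + gAux c D k) - D (k + 2) := rfl
      nlinarith [mul_nonneg (by linarith : (0:ℤ) ≤ c (k + 1) - 2) hg1]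
  have gnn : ∀ k, k ≤ r → 0 ≤ gAux c D k := by
    intro k hk
    cases k with
    | zero => simp [gAux]
    | succ k => exact le_trans (key k hk).1 (key k hk).2
  refine ⟨fun i => if r < i then 0 else gAux c D i, ?_, ?_, ?_, ?_⟩
  · intro i
    by_cases h : r < i
    · simp [h]
    · simpa [h] using gnn i (by omega)
  · intro i hi
    interval_cases i <;> simp [gAux]
  · intro i hi; simp [hi]
  · intro i hi hir
    obtain ⟨k, rfl⟩ : ∃ k, i = k + 1 := ⟨i - 1, by omega⟩
    have h0 : ¬ r < k := by omega
    have h1 : ¬ r < k + 1 := by omega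
    have h2 : ¬ r < k + 2 := by omega
    have heq : gAux c D (k + 2) =
        c (k + 1) * (D (k + 1) + gAux c D (k + 1)) - (D k + gAux c D k) - D (k + 2) := rfl
    simp only [chainDot, Pi.add_apply, Nat.add_sub_cancel, if_pos hir, h0, h1, h2, if_neg,
      not_false_iff]
    rw [heq]; ring
end

section
/- If D ∈ 𝒟(m_0) satisfies D·E_i = 0 for all 1 ≤ i < r and D·E_r ≥ −1, then D is the smallest element of 𝒟(m_0): every D' ∈ 𝒟(m_0) satisfies D ≤ D' componentwise. -/
/-- If `D ∈ 𝒟(m₀)` satisfies `D·E i = 0` for all `1 ≤ i < r` and `D·E r ≥ −1`,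
then `D` is the smallest element of `𝒟(m₀)`. -/
theorem chain_smallest_criterion (r : ℕ) (hr : 1 ≤ r) (c : ℕ → ℤ)
    (hc : ∀ i, 1 ≤ i → i ≤ r → 2 ≤ c i) (m₀ : ℤ) (hm₀ : 0 < m₀)
    (D : ℕ → ℤ) (hD : memD r c m₀ D)
    (hzero : ∀ i, 1 ≤ i → i < r → chainDot r c D i = 0)
    (hr' : -1 ≤ chainDot r c D r) :
    ∀ D' : ℕ → ℤ, memD r c m₀ D' → ∀ i ≤ r, D i ≤ D' i := by
  classical
  obtain ⟨hD0, hDpos, hDle⟩ := hD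
  intro D' hD'
  obtain ⟨hD0', hDpos', hDle'⟩ := hD'
  by_contra hcon
  push_neg at hcon
  obtain ⟨i0, hi0r, hi0⟩ := hcon
  have hp : ∃ j, j ≤ r ∧ D' j < D j := ⟨i0, hi0r, hi0⟩
  obtain ⟨hjr, hjlt⟩ := Nat.find_spec hp
  set j := Nat.find hp with hjdef
  have hj1 : 1 ≤ j := by
    rcases Nat.eq_zero_or_pos j with h | h
    · rw [h, hD0, hD0'] at hjlt
      exact absurd hjlt (lt_irrefl _)
    · exact h
  have hmin : ∀ k, k < j → k ≤ r → D k ≤ D' k := by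
    intro k hk hkr
    by_contra h
    push_neg at h
    exact Nat.find_min hp hk ⟨hkr, h⟩
  have key : ∀ i, j ≤ i → i ≤ r →
      (D' i ≤ D i - 1 ∧ D' i - D i ≤ D' (i-1) - D (i-1) - 1) := by
    intro i hji
    induction i, hji using Nat.le_induction with
    | base =>
      intro _
      have h1 : D (j-1) ≤ D' (j-1) := hmin (j-1) (by omega) (by omega)
      constructor <;> omega
    | succ n hjn IH =>
      intro hn1r
      have hnr : n < r := by omega
      have h1n : 1 ≤ n := by omega
      obtain ⟨k1, k2⟩ := IH (le_of_lt hnr)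
      have h0 := hzero n h1n hnr
      have h1 := hDle' n h1n (le_of_lt hnr)
      unfold chainDot at h0 h1
      rw [if_pos hnr] at h0 h1
      have hcn := hc n h1n (le_of_lt hnr)
      have hmul : (c n - 2) * (D' n - D n) ≤ 0 :=
        mul_nonpos_of_nonneg_of_nonpos (by linarith) (by linarith)
      simp only [Nat.add_sub_cancel]
      constructor <;> nlinarith [h0, h1, hmul, k1, k2]
  obtain ⟨k1, k2⟩ := key r hjr le_rfl
  have h1 := hDle' r hr le_rfl
  unfold chainDot at h1 hr'
  rw [if_neg (lt_irrefl r)] at h1 hr'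
  have hcr := hc r hr le_rfl
  have hmul : (c r - 2) * (D' r - D r) ≤ 0 :=
    mul_nonpos_of_nonneg_of_nonpos (by linarith) (by linarith)
  nlinarith [h1, hr', hmul, k1, k2]
end

section
/- Suppose D = (m_0, m_1, …, m_r) and D' = (m_0, m_1', …, m_r') both belong to 𝒟(m_0) and D·E_i = D'·E_i for all 1 ≤ i < r. If D ≥ D' componentwise and D ≠ D', then m_1 > m_1' (the coefficient of E_1 in D strictly exceeds that in D'). -/
/-- If `D, D' ∈ 𝒟(m₀)` have the same intersection numbers with `E i` for
`1 ≤ i < r`, and `D ≥ D'` componentwise with `D ≠ D'` (on the coefficients of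
`E_0, …, E_r`), then the coefficient of `E_1` in `D` strictly exceeds that in `D'`. -/
theorem chain_E1_coefficient_strict (r : ℕ) (hr : 1 ≤ r) (c : ℕ → ℤ)
    (hc : ∀ i, 1 ≤ i → i ≤ r → 2 ≤ c i) (m₀ : ℤ) (hm₀ : 0 < m₀)
    (D D' : ℕ → ℤ) (hD : memD r c m₀ D) (hD' : memD r c m₀ D')
    (hdot : ∀ i, 1 ≤ i → i < r → chainDot r c D i = chainDot r c D' i)
    (hge : ∀ i ≤ r, D' i ≤ D i)
    (hne : ¬ (∀ i ≤ r, D i = D' i)) :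
    D' 1 < D 1 := by
  by_contra h
  push_neg at h
  have h1 : D 1 = D' 1 := le_antisymm h (hge 1 hr)
  apply hne
  intro i hi
  induction i using Nat.strong_induction_on with
  | _ i ih =>
    match i, hi with
    | 0, _ => exact hD.1.trans hD'.1.symm
    | 1, _ => exact h1
    | (k+2), hk =>
      have hk1 : k + 1 < r := by omega
      have e1 : D k = D' k := ih k (by omega) (by omega)
      have e2 : D (k+1) = D' (k+1) := ih (k+1) (by omega) (by omega)
      have hd := hdot (k+1) (by omega) hk1
      unfold chainDot at hd
      simp only [Nat.add_sub_cancel, if_pos hk1] at hd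
      rw [e2] at hd
      linarith
end

section
/- Assume D is the smallest element of 𝒟(m_0) and D' is the smallest element of 𝒟(m_0'), and assume that D'·E_i = 0 for all 1 ≤ i ≤ r. Then the componentwise sum D + D' is the smallest element of 𝒟(m_0 + m_0'). -/
lemma chainDot_add (r : ℕ) (c : ℕ → ℤ) (A B : ℕ → ℤ) (i : ℕ) :
    chainDot r c (fun j => A j + B j) i = chainDot r c A i + chainDot r c B i := by
  unfold chainDot
  split_ifs <;> ring

lemma chainDot_sub (r : ℕ) (c : ℕ → ℤ) (A B : ℕ → ℤ) (i : ℕ) :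
    chainDot r c (fun j => A j - B j) i = chainDot r c A i - chainDot r c B i := by
  unfold chainDot
  split_ifs <;> ring

/-- Discrete maximum principle: if `x 0 > 0` and the dot conditions hold, all
coefficients `x 1, …, x r` are positive. -/
lemma chain_pos (r : ℕ) (hr : 1 ≤ r) (c x : ℕ → ℤ)
    (hc : ∀ i, 1 ≤ i → i ≤ r → 2 ≤ c i) (hx0 : 0 < x 0)
    (hdot : ∀ i, 1 ≤ i → i ≤ r → chainDot r c x i ≤ 0) :
    ∀ i, 1 ≤ i → i ≤ r → 0 < x i := by
  by_contra h
  push_neg at h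
  obtain ⟨k, hk1, hkr, hxk⟩ := h
  -- take the minimal such k
  have hEx : ∃ k, 1 ≤ k ∧ k ≤ r ∧ x k ≤ 0 := ⟨k, hk1, hkr, hxk⟩
  classical
  set K := Nat.find hEx with hKdef
  obtain ⟨hK1, hKr, hxK⟩ := Nat.find_spec hEx
  have hprev : 0 < x (K - 1) := by
    rcases Nat.eq_or_lt_of_le hK1 with h1 | h1
    · have h0 : K - 1 = 0 := by omega
      rw [h0]; exact hx0
    · have h2 : 1 ≤ K - 1 := by omega
      have h3 : K - 1 ≤ r := by omega
      by_contra hle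
      push_neg at hle
      have := Nat.find_min hEx (m := K - 1) (by omega)
      exact this ⟨h2, h3, hle⟩
  -- invariant : for K ≤ j ≤ r, x j ≤ 0 and x j < x (j-1)
  have key : ∀ j, K ≤ j → j ≤ r → x j ≤ 0 ∧ x j < x (j - 1) := by
    intro j hj
    induction j, hj using Nat.le_induction with
    | base => intro _; exact ⟨hxK, lt_of_le_of_lt hxK hprev⟩
    | succ j hKj ih =>
      intro hjr
      have hjr' : j ≤ r := by omega
      obtain ⟨h0, hlt⟩ := ih (by omega)
      have hd := hdot j (by omega) (by omega)
      have hjlt : j < r := by omega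
      rw [chainDot, if_pos hjlt] at hd
      have hcj : 2 ≤ c j := hc j (by omega) (by omega)
      have hmul : c j * x j ≤ 2 * x j := by
        have := mul_le_mul_of_nonpos_right hcj h0
        linarith
      have hj1 : j + 1 - 1 = j := by omega
      rw [hj1]
      constructor <;> linarith
  obtain ⟨hr0, hrlt⟩ := key r hKr le_rfl
  have hd := hdot r hr le_rfl
  rw [chainDot, if_neg (lt_irrefl r)] at hd
  have hcr : 2 ≤ c r := hc r hr le_rfl
  have hmul : c r * x r ≤ 2 * x r := by
    have := mul_le_mul_of_nonpos_right hcr hr0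
    linarith
  linarith

/-- If `D` is the smallest element of `𝒟(m₀)`, `D'` is the smallest element of
`𝒟(m₀')`, and `D'·E i = 0` for all `1 ≤ i ≤ r`, then `D + D'` is the smallest
element of `𝒟(m₀ + m₀')`. -/
theorem chain_smallest_add (r : ℕ) (hr : 1 ≤ r) (c : ℕ → ℤ)
    (hc : ∀ i, 1 ≤ i → i ≤ r → 2 ≤ c i) (m₀ m₀' : ℤ) (hm₀ : 0 < m₀) (hm₀' : 0 < m₀')
    (D D' : ℕ → ℤ)
    (hD : memD r c m₀ D) (hDmin : ∀ C : ℕ → ℤ, memD r c m₀ C → ∀ i ≤ r, D i ≤ C i)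
    (hD' : memD r c m₀' D')
    (hD'min : ∀ C : ℕ → ℤ, memD r c m₀' C → ∀ i ≤ r, D' i ≤ C i)
    (hD'dot : ∀ i, 1 ≤ i → i ≤ r → chainDot r c D' i = 0) :
    memD r c (m₀ + m₀') (D + D') ∧
      ∀ C : ℕ → ℤ, memD r c (m₀ + m₀') C → ∀ i ≤ r, (D + D') i ≤ C i := by
  obtain ⟨hD0, hDpos, hDdot⟩ := hD
  obtain ⟨hD'0, hD'pos, hD'dot'⟩ := hD'
  constructor
  · refine ⟨by simp [hD0, hD'0], ?_, ?_⟩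
    · intro i h1 h2
      have := hDpos i h1 h2
      have := hD'pos i h1 h2
      simp only [Pi.add_apply]
      linarith
    · intro i h1 h2
      have hadd : chainDot r c (D + D') i
          = chainDot r c D i + chainDot r c D' i := chainDot_add r c D D' i
      have := hDdot i h1 h2
      have := hD'dot i h1 h2
      linarith [hadd.le, hadd.ge]
  · intro C hC i hir
    obtain ⟨hC0, hCpos, hCdot⟩ := hC
    set x : ℕ → ℤ := fun j => C j - D' j with hx
    have hx0 : 0 < x 0 := by simp [hx, hC0, hD'0]; linarith
    have hxdot : ∀ i, 1 ≤ i → i ≤ r → chainDot r c x i ≤ 0 := by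
      intro j h1 h2
      have hsub := chainDot_sub r c C D' j
      have := hCdot j h1 h2
      have := hD'dot j h1 h2
      rw [hx, hsub]
      linarith
    have hxpos := chain_pos r hr c x hc hx0 hxdot
    have hxmem : memD r c m₀ x := by
      refine ⟨?_, hxpos, hxdot⟩
      simp [hx, hC0, hD'0]
    have hle := hDmin x hxmem i hir
    simp only [hx, Pi.add_apply] at *
    linarith
end

section
/- With k = (4,0,0,0): (a) the vector (8,4,4,4) = 4·(2,1,1,1) satisfies M·(8,4,4,4) = −k, so the canonical cycle of Γ(2,3,3,4) is Z_{K_X} = 4·Z_X; (b) the fundamental genus is p_a(Z_X) = p_a((2,1,1,1)) = 4; (c) the maximum of p_a(z) over all nonzero cycles z ∈ ℤ⁴, z ≥ 0, equals 5, and it is attained at z = 2·Z_X = (4,2,2,2) (so the arithmetic genus of any singularity with resolution graph Γ(2,3,3,4) is 5). -/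
/-!
Completing the square around `Z_K / 2`: when `M` is symmetric and `M Z_K = -k`,
`4 (zᵀMz + k·z) = (2z - Z_K)ᵀ M (2z - Z_K) + k·Z_K`.
For `Γ(2,3,3,4)` the form `M` is negative definite and `k·Z_K = 32`, so `zᵀMz + k·z ≤ 8`,
i.e. `p_a(z) ≤ 5`, with equality exactly at `z = Z_K / 2 = 2·Z_X`.
-/

open Matrix

section CommRing

variable {ι R : Type*} [Fintype ι] [CommRing R] {M : Matrix ι ι R} {k Z : ι → R}

theorem four_mul_dotProduct_mulVec_add_dotProduct_eq (hM : M.IsSymm) (hZ : M *ᵥ Z = -k)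
    (z : ι → R) :
    4 * (z ⬝ᵥ M *ᵥ z + k ⬝ᵥ z) = (2 • z - Z) ⬝ᵥ M *ᵥ (2 • z - Z) + k ⬝ᵥ Z := by
  have hsymm : Z ⬝ᵥ M *ᵥ z = z ⬝ᵥ M *ᵥ Z := by
    rw [dotProduct_mulVec, dotProduct_comm, ← vecMul_transpose, hM.eq]
  simp only [mulVec_sub, mulVec_smul, dotProduct_sub, sub_dotProduct, dotProduct_smul,
    smul_dotProduct, hsymm, hZ, dotProduct_neg]
  rw [dotProduct_comm z k, dotProduct_comm Z k]
  ring

end CommRing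

section OrderedRing

variable {ι R : Type*} [Fintype ι] [CommRing R] [LinearOrder R] [IsStrictOrderedRing R]
  {M : Matrix ι ι R} {k Z : ι → R}

theorem four_mul_dotProduct_mulVec_add_dotProduct_le (hM : M.IsSymm) (hZ : M *ᵥ Z = -k)
    (hneg : ∀ x, x ⬝ᵥ M *ᵥ x ≤ 0) (z : ι → R) :
    4 * (z ⬝ᵥ M *ᵥ z + k ⬝ᵥ z) ≤ k ⬝ᵥ Z := by
  rw [four_mul_dotProduct_mulVec_add_dotProduct_eq hM hZ]
  linarith [hneg (2 • z - Z)]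

end OrderedRing

def intersectionMatrix2334 : Matrix (Fin 4) (Fin 4) ℤ :=
  !![-2, 1, 1, 1; 1, -2, 0, 0; 1, 0, -2, 0; 1, 0, 0, -2]

theorem intersectionMatrix2334_isSymm : intersectionMatrix2334.IsSymm := by decide

theorem intersectionMatrix2334_mulVec_canonicalCycle :
    intersectionMatrix2334 *ᵥ ![8, 4, 4, 4] = -![4, 0, 0, 0] := by decide

theorem two_mul_dotProduct_intersectionMatrix2334_mulVec (x : Fin 4 → ℤ) :
    2 * (x ⬝ᵥ intersectionMatrix2334 *ᵥ x) =
      -((2 * x 1 - x 0) ^ 2 + (2 * x 2 - x 0) ^ 2 + (2 * x 3 - x 0) ^ 2 + x 0 ^ 2) := by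
  simp [intersectionMatrix2334, dotProduct, mulVec, Fin.sum_univ_four]
  ring

theorem dotProduct_intersectionMatrix2334_mulVec_nonpos (x : Fin 4 → ℤ) :
    x ⬝ᵥ intersectionMatrix2334 *ᵥ x ≤ 0 := by
  have := two_mul_dotProduct_intersectionMatrix2334_mulVec x
  nlinarith [sq_nonneg (2 * x 1 - x 0), sq_nonneg (2 * x 2 - x 0), sq_nonneg (2 * x 3 - x 0),
    sq_nonneg (x 0)]

/-- With `k = (4,0,0,0)`:
(a) `M·(8,4,4,4) = −k` and `(8,4,4,4) = 4·(2,1,1,1)`, so the canonical cycle of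
`Γ(2,3,3,4)` is `Z_{K_X} = 4·Z_X`;
(b) the fundamental genus is `p_a(Z_X) = p_a((2,1,1,1)) = 4`;
(c) the maximum of `p_a(z)` over nonzero cycles `z ≥ 0` equals `5`, attained at
`z = 2·Z_X = (4,2,2,2)`. -/
theorem arithmetic_genus_2334
    (M : Matrix (Fin 4) (Fin 4) ℤ)
    (hM : M = !![-2, 1, 1, 1; 1, -2, 0, 0; 1, 0, -2, 0; 1, 0, 0, -2])
    (k : Fin 4 → ℤ) (hk : k = ![4, 0, 0, 0])
    (pa : (Fin 4 → ℤ) → ℤ)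
    (hpa : ∀ z : Fin 4 → ℤ, pa z = 1 + (z ⬝ᵥ M.mulVec z + k ⬝ᵥ z) / 2) :
    (M.mulVec ![8, 4, 4, 4] = -k ∧
      (![8, 4, 4, 4] : Fin 4 → ℤ) = (4 : ℤ) • ![2, 1, 1, 1]) ∧
    pa ![2, 1, 1, 1] = 4 ∧
    (pa ![4, 2, 2, 2] = 5 ∧
      (![4, 2, 2, 2] : Fin 4 → ℤ) = (2 : ℤ) • ![2, 1, 1, 1] ∧
      ∀ z : Fin 4 → ℤ, (∀ i, 0 ≤ z i) → z ≠ 0 → pa z ≤ 5) := by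
  obtain rfl : M = intersectionMatrix2334 := hM
  subst hk
  refine ⟨⟨intersectionMatrix2334_mulVec_canonicalCycle, by decide⟩, by rw [hpa]; decide,
    by rw [hpa]; decide, by decide, fun z _ _ => ?_⟩
  have hle := four_mul_dotProduct_mulVec_add_dotProduct_le intersectionMatrix2334_isSymm
    intersectionMatrix2334_mulVec_canonicalCycle dotProduct_intersectionMatrix2334_mulVec_nonpos z
  have hKZ : (![4, 0, 0, 0] : Fin 4 → ℤ) ⬝ᵥ ![8, 4, 4, 4] = 32 := by decide
  rw [hpa]
  omega
end
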